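/- arXiv:1802.09112 — 10 statements merged into one kernel-verified Lean document; each statement's English description precedes it below -/
import Mathlib

section
/- If f''(δ) ≥ (2/δ)(f'(δ) - f(δ)/δ) (equivalently g₃ ≥ 0), f is increasing and differentiable on [δ, U), and f' is nonincreasing on [δ, U), then the δ-smoothing g of f is increasing and concave on [0, U). -/
theorem stmt_2 (f : ℝ → ℝ) (U : EReal) (δ : ℝ) (hδ : 0 < δ) (hδU : (δ : EReal) < U)
    (hf0 : f 0 = 0)
    (hf1 : DifferentiableAt ℝ f δ) (hf2 : DifferentiableAt ℝ (deriv f) δ)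
    (hmono : StrictMonoOn f {w : ℝ | δ ≤ w ∧ (w : EReal) < U})
    (hdiff : ∀ w : ℝ, δ ≤ w → (w : EReal) < U → DifferentiableAt ℝ f w)
    (hanti : AntitoneOn (deriv f) {w : ℝ | δ ≤ w ∧ (w : EReal) < U})
    (hcond : deriv (deriv f) δ ≥ 2 / δ * (deriv f δ - f δ / δ))
    (g : ℝ → ℝ)
    (hg : g = fun w =>
      if w ≤ δ then
        (3 * f δ / δ - 2 * deriv f δ + δ * deriv (deriv f) δ / 2) * w +
        (-6 * f δ / δ ^ 2 + 6 * deriv f δ / δ - 2 * deriv (deriv f) δ) / 2 * w ^ 2 +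
        (6 * f δ / δ ^ 3 - 6 * deriv f δ / δ ^ 2 + 3 * deriv (deriv f) δ / δ) / 6 * w ^ 3
      else f w) :
    StrictMonoOn g {w : ℝ | 0 ≤ w ∧ (w : EReal) < U} ∧
      ConcaveOn ℝ {w : ℝ | 0 ≤ w ∧ (w : EReal) < U} g := by
  have hδ0 : δ ≠ 0 := ne_of_gt hδ
  obtain ⟨w', hw1, hw2⟩ := EReal.exists_between_coe_real hδU
  have hw1' : δ < w' := by exact_mod_cast hw1
  -- abbreviations for the coefficients
  set c1 := 3 * f δ / δ - 2 * deriv f δ + δ * deriv (deriv f) δ / 2 with hc1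
  set c2 := -6 * f δ / δ ^ 2 + 6 * deriv f δ / δ - 2 * deriv (deriv f) δ with hc2
  set c3 := 6 * f δ / δ ^ 3 - 6 * deriv f δ / δ ^ 2 + 3 * deriv (deriv f) δ / δ with hc3
  set P : ℝ → ℝ := fun w => c1 * w + c2 / 2 * w ^ 2 + c3 / 6 * w ^ 3 with hPdef
  set Q : ℝ → ℝ := fun w => c1 + c2 * w + c3 / 2 * w ^ 2 with hQdef
  -- the derivative of f at δ is positive
  have hApos : 0 < deriv f δ := by
    by_contra h
    push_neg at h
    have hsub : Set.Icc δ w' ⊆ {w : ℝ | δ ≤ w ∧ (w : EReal) < U} := fun x hx =>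
      ⟨hx.1, lt_of_le_of_lt (EReal.coe_le_coe_iff.2 hx.2) hw2⟩
    have hcont : ContinuousOn f (Set.Icc δ w') := fun x hx =>
      ((hdiff x hx.1 (hsub hx).2).continuousAt).continuousWithinAt
    have hdiffOn : DifferentiableOn ℝ f (interior (Set.Icc δ w')) := by
      rw [interior_Icc]
      intro x hx
      exact (hdiff x hx.1.le (hsub ⟨hx.1.le, hx.2.le⟩).2).differentiableWithinAt
    have hderiv_nonpos : ∀ x ∈ interior (Set.Icc δ w'), deriv f x ≤ 0 := by
      rw [interior_Icc]
      intro x hx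
      exact (hanti ⟨le_refl δ, hδU⟩ (hsub ⟨hx.1.le, hx.2.le⟩) hx.1.le).trans h
    have h1 := antitoneOn_of_deriv_nonpos (convex_Icc δ w') hcont hdiffOn hderiv_nonpos
      (Set.left_mem_Icc.2 hw1'.le) (Set.right_mem_Icc.2 hw1'.le) hw1'.le
    have h2 := hmono ⟨le_refl δ, hδU⟩ ⟨hw1'.le, hw2⟩ hw1'
    linarith
  -- the second derivative of f at δ is nonpositive
  have hBle : deriv (deriv f) δ ≤ 0 := by
    have hslope : Filter.Tendsto (slope (deriv f) δ) (nhdsWithin δ (Set.Ioi δ))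
        (nhds (deriv (deriv f) δ)) :=
      (hasDerivAt_iff_tendsto_slope.1 hf2.hasDerivAt).mono_left
        (nhdsWithin_mono δ (fun x hx => ne_of_gt hx))
    refine le_of_tendsto hslope ?_
    filter_upwards [Ioo_mem_nhdsGT_of_mem (Set.left_mem_Ico.2 hw1')] with x hx
    have hxU : (x : EReal) < U := lt_trans (EReal.coe_lt_coe_iff.2 hx.2) hw2
    have hle : deriv f x ≤ deriv f δ := hanti ⟨le_refl δ, hδU⟩ ⟨hx.1.le, hxU⟩ hx.1.le
    rw [slope_def_field]
    exact div_nonpos_iff.2 (Or.inr ⟨by linarith, by linarith [hx.1]⟩)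
  -- c3 is nonnegative
  have hG3 : 0 ≤ c3 := by
    have hcond' : 0 ≤ deriv (deriv f) δ - 2 / δ * (deriv f δ - f δ / δ) := by linarith
    have : c3 = 3 / δ * (deriv (deriv f) δ - 2 / δ * (deriv f δ - f δ / δ)) := by
      rw [hc3]; field_simp; ring
    rw [this]
    exact mul_nonneg (by positivity) hcond'
  have hkey : c2 + c3 * δ = deriv (deriv f) δ := by
    rw [hc2, hc3]; field_simp; ring
  have hQδ : Q δ = deriv f δ := by
    rw [hQdef]; simp only []
    rw [hc1, hc2, hc3]; field_simp; ring
  have hPδ : P δ = f δ := by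
    rw [hPdef]; simp only []
    rw [hc1, hc2, hc3]; field_simp; ring
  clear_value c1 c2 c3
  -- Q is antitone below δ
  have hQanti : ∀ x y : ℝ, x ≤ y → y ≤ δ → Q y ≤ Q x := by
    intro x y hxy hyδ
    simp only [hQdef]
    have hc2' : c2 = deriv (deriv f) δ - c3 * δ := by linarith [hkey]
    rw [hc2']
    nlinarith [mul_nonneg (mul_nonneg (sub_nonneg.2 hxy) hG3)
        (show (0:ℝ) ≤ 2 * δ - x - y by linarith),
      mul_nonneg (sub_nonneg.2 hxy) (neg_nonneg.2 hBle)]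
  -- P has derivative Q
  have hP' : ∀ w : ℝ, HasDerivAt P (Q w) w := by
    intro w
    have h1 : HasDerivAt P (c1 * 1 + c2 / 2 * (↑2 * w ^ 1) + c3 / 6 * (↑3 * w ^ 2)) w :=
      (((hasDerivAt_id w).const_mul c1).add ((hasDerivAt_pow 2 w).const_mul (c2 / 2))).add
        ((hasDerivAt_pow 3 w).const_mul (c3 / 6))
    convert h1 using 1
    simp [hQdef]; ring
  -- facts about g
  have hgP : ∀ w : ℝ, w ≤ δ → g w = P w := by
    intro w h
    rw [hg]
    simp only [if_pos h, hPdef]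
  have hgf : ∀ w : ℝ, δ < w → g w = f w := by
    intro w h
    rw [hg]
    simp only [if_neg (not_le.2 h)]
  have hgδ : g δ = f δ := (hgP δ le_rfl).trans hPδ
  have hgf2 : ∀ w : ℝ, δ ≤ w → g w = f w := by
    intro w h
    rcases eq_or_lt_of_le h with h | h
    · rw [← h]; exact hgδ
    · exact hgf w h
  -- derivative facts about g
  have hgP' : ∀ w : ℝ, w < δ → HasDerivAt g (Q w) w := by
    intro w h
    exact (hP' w).congr_of_eventuallyEq
      (Filter.eventuallyEq_of_mem (Iio_mem_nhds h) (fun y hy => hgP y (le_of_lt hy)))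
  have hgδ' : HasDerivAt g (deriv f δ) δ := by
    have h1 : HasDerivWithinAt g (deriv f δ) (Set.Iic δ) δ := by
      have := ((hP' δ).hasDerivWithinAt (s := Set.Iic δ)).congr
        (fun y hy => hgP y hy) (hgP δ le_rfl)
      rwa [hQδ] at this
    have h2 : HasDerivWithinAt g (deriv f δ) (Set.Ici δ) δ :=
      (hf1.hasDerivAt.hasDerivWithinAt (s := Set.Ici δ)).congr
        (fun y hy => hgf2 y hy) (hgf2 δ le_rfl)
    have h3 := h1.union h2
    rw [Set.Iic_union_Ici] at h3
    exact hasDerivWithinAt_univ.1 h3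
  have hgf' : ∀ w : ℝ, δ < w → (w : EReal) < U → HasDerivAt g (deriv f w) w := by
    intro w h hU
    exact ((hdiff w h.le hU).hasDerivAt).congr_of_eventuallyEq
      (Filter.eventuallyEq_of_mem (Ioi_mem_nhds h) (fun y hy => hgf y hy))
  -- values of deriv g
  have hdg1 : ∀ w : ℝ, w ≤ δ → deriv g w = Q w := by
    intro w h
    rcases eq_or_lt_of_le h with h | h
    · subst h; rw [hgδ'.deriv, hQδ]
    · exact (hgP' w h).deriv
  have hdg2 : ∀ w : ℝ, δ ≤ w → (w : EReal) < U → deriv g w = deriv f w := by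
    intro w h hU
    rcases eq_or_lt_of_le h with h | h
    · subst h; exact hgδ'.deriv
    · exact (hgf' w h hU).deriv
  -- g is differentiable at every point of S
  have hgdiff : ∀ w ∈ {w : ℝ | 0 ≤ w ∧ (w : EReal) < U}, DifferentiableAt ℝ g w := by
    intro w hw
    rcases lt_trichotomy w δ with h | h | h
    · exact (hgP' w h).differentiableAt
    · subst h; exact hgδ'.differentiableAt
    · exact (hgf' w h hw.2).differentiableAt
  -- convexity of S
  have hSconv : Convex ℝ {w : ℝ | 0 ≤ w ∧ (w : EReal) < U} := by
    have hoc : Set.OrdConnected {w : ℝ | 0 ≤ w ∧ (w : EReal) < U} :=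
      ⟨fun x hx y hy z hz =>
        ⟨hx.1.trans hz.1, lt_of_le_of_lt (EReal.coe_le_coe_iff.2 hz.2) hy.2⟩⟩
    exact hoc.convex
  have hScont : ContinuousOn g {w : ℝ | 0 ≤ w ∧ (w : EReal) < U} := fun w hw =>
    (hgdiff w hw).continuousAt.continuousWithinAt
  -- deriv g is antitone on S
  have hAnti : AntitoneOn (deriv g) {w : ℝ | 0 ≤ w ∧ (w : EReal) < U} := by
    intro x hx y hy hxy
    have hxU : (x : EReal) < U := hx.2
    rcases le_or_gt y δ with h | h
    · rw [hdg1 x (hxy.trans h), hdg1 y h]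
      exact hQanti x y hxy h
    · rcases le_or_gt δ x with h2 | h2
      · rw [hdg2 x h2 hxU, hdg2 y h.le hy.2]
        exact hanti ⟨h2, hxU⟩ ⟨h.le, hy.2⟩ hxy
      · rw [hdg1 x h2.le, hdg2 y h.le hy.2]
        calc deriv f y ≤ deriv f δ := hanti ⟨le_rfl, hδU⟩ ⟨h.le, hy.2⟩ h.le
          _ = Q δ := hQδ.symm
          _ ≤ Q x := hQanti x δ h2.le le_rfl
  -- P is strictly monotone on [0, δ]
  have hPmono : StrictMonoOn P (Set.Icc 0 δ) := by
    apply strictMonoOn_of_deriv_pos (convex_Icc 0 δ)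
    · apply Continuous.continuousOn
      rw [hPdef]
      exact ((continuous_const.mul continuous_id).add
        (continuous_const.mul (continuous_pow 2))).add
        (continuous_const.mul (continuous_pow 3))
    · intro x hx
      rw [interior_Icc] at hx
      rw [(hP' x).deriv]
      have h1 : Q δ ≤ Q x := hQanti x δ hx.2.le le_rfl
      rw [hQδ] at h1
      linarith
  constructor
  · -- strict monotonicity
    intro x hx y hy hxy
    rcases le_or_gt y δ with h | h
    · rw [hgP x (hxy.le.trans h), hgP y h]
      exact hPmono ⟨hx.1, hxy.le.trans h⟩ ⟨hy.1, h⟩ hxy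
    · rcases le_or_gt δ x with h2 | h2
      · rw [hgf2 x h2, hgf2 y h.le]
        exact hmono ⟨h2, hx.2⟩ ⟨h.le, hy.2⟩ hxy
      · have h1 : g x < g δ := by
          rw [hgP x h2.le, hgP δ le_rfl]
          exact hPmono ⟨hx.1, h2.le⟩ ⟨hδ.le, le_rfl⟩ h2
        have h3 : f δ < f y := hmono ⟨le_rfl, hδU⟩ ⟨h.le, hy.2⟩ h
        rw [hgδ] at h1
        rw [hgf y h]
        linarith
  · -- concavity
    exact AntitoneOn.concaveOn_of_deriv hSconv hScont
      (fun w hw => (hgdiff w (interior_subset hw)).differentiableWithinAt)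
      (hAnti.mono interior_subset)
end

section
/- Suppose f is increasing and differentiable on [δ, U) and f' is nonincreasing on [δ, U). Then the δ-smoothing g is increasing and concave on [0, U) if and only if f''(δ) ≥ (3/δ)(f'(δ) - f(δ)/δ), i.e., if and only if g₂ ≤ 0. -/
open Set Filter Topology

/-!
On `[0, δ]` the smoothing is the cubic `P` that matches `f` to second order at `δ`, so `g` is
differentiable on `[0, U)` with `g' = P'` on `[0, δ]` and `g' = f'` on `[δ, U)`. Since `P''`
is affine with `P''(0) = g₂` and `P''(δ) = f''(δ) ≤ 0` (as `f'` is nonincreasing), `g₂ ≤ 0`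
makes `g'` nonincreasing on `[0, U)`, and then bounded below by values of `f' > 0`. Conversely,
the midpoint inequality for the concave cubic on `[0, t]` reads `t² (g₂ + g₃ t / 2) ≤ 0`, and
`t → 0⁺` gives `g₂ ≤ 0`. The condition on `f''(δ)` is `g₂ ≤ 0` rewritten.
-/

/-- The cubic with value `0` and derivatives `a, b, c` at `0` (the paper's `g₁, g₂, g₃`). -/
noncomputable def taylorCubic (a b c w : ℝ) : ℝ := a * w + b / 2 * w ^ 2 + c / 6 * w ^ 3

theorem hasDerivAt_taylorCubic (a b c x : ℝ) :
    HasDerivAt (taylorCubic a b c) (a + b * x + c / 2 * x ^ 2) x := by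
  have h1 := (hasDerivAt_id' x).const_mul a
  have h2 := (hasDerivAt_pow 2 x).const_mul (b / 2)
  have h3 := (hasDerivAt_pow 3 x).const_mul (c / 6)
  exact ((h1.add h2).add h3).congr_deriv (by push_cast; ring)

theorem antitoneOn_quadratic_Icc {a b c δ : ℝ} (hb : b ≤ 0) (hbc : b + c * δ ≤ 0) :
    AntitoneOn (fun x => a + b * x + c / 2 * x ^ 2) (Icc 0 δ) := by
  intro x hx y hy hxy
  have hslope : 0 ≤ -b - c * (x + y) / 2 := by
    rcases le_total 0 c with hc | hc <;> nlinarith [hx.1, hy.1, hx.2, hy.2]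
  calc a + b * y + c / 2 * y ^ 2
      = a + b * x + c / 2 * x ^ 2 - (y - x) * (-b - c * (x + y) / 2) := by ring
    _ ≤ a + b * x + c / 2 * x ^ 2 := sub_le_self _ (mul_nonneg (sub_nonneg.2 hxy) hslope)

theorem nonpos_of_concaveOn_taylorCubic {a b c δ : ℝ} (hδ : 0 < δ)
    (h : ConcaveOn ℝ (Icc 0 δ) (taylorCubic a b c)) : b ≤ 0 := by
  have hmid : ∀ t ∈ Ioc 0 δ, b + c * t / 2 ≤ 0 := by
    intro t ht
    have := h.2 (left_mem_Icc.2 hδ.le) (Ioc_subset_Icc_self ht)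
      (by norm_num : (0 : ℝ) ≤ 1 / 2) (by norm_num : (0 : ℝ) ≤ 1 / 2) (by norm_num)
    simp only [smul_eq_mul, taylorCubic] at this
    have ht2 : 0 < t ^ 2 / 8 := by have := ht.1; positivity
    nlinarith
  have hlim : Tendsto (fun t => b + c * t / 2) (𝓝[>] 0) (𝓝 b) :=
    ((by fun_prop : Continuous fun t : ℝ => b + c * t / 2).tendsto' 0 b (by simp)).mono_left
      nhdsWithin_le_nhds
  exact le_of_tendsto hlim (eventually_of_mem (Ioc_mem_nhdsGT hδ) hmid)

theorem hasDerivAt_ite_le {p q : ℝ → ℝ} {a x d : ℝ} (hp : x ≤ a → HasDerivAt p d x)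
    (hq : a ≤ x → HasDerivAt q d x) (hpq : p a = q a) :
    HasDerivAt (fun w => if w ≤ a then p w else q w) d x := by
  rcases lt_trichotomy x a with hxa | rfl | hax
  · refine (hp hxa.le).congr_of_eventuallyEq ?_
    filter_upwards [Iio_mem_nhds hxa] with w hw
    exact if_pos (le_of_lt hw)
  · have hleft : HasDerivWithinAt (fun w => if w ≤ x then p w else q w) d (Iic x) x :=
      (hp le_rfl).hasDerivWithinAt.congr (fun w hw => if_pos hw) (if_pos le_rfl)
    have hright : HasDerivWithinAt (fun w => if w ≤ x then p w else q w) d (Ici x) x := by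
      refine (hq le_rfl).hasDerivWithinAt.congr (fun w hw => ?_) (by simp [hpq])
      split_ifs with h
      · obtain rfl := le_antisymm h hw
        exact hpq
      · rfl
    simpa [Iic_union_Ici] using hleft.union hright
  · refine (hq hax.le).congr_of_eventuallyEq ?_
    filter_upwards [Ioi_mem_nhds hax] with w hw
    exact if_neg (not_le.mpr hw)

theorem deriv_nonpos_of_antitoneOn_Icc {φ : ℝ → ℝ} {a b : ℝ} (hab : a < b)
    (hφ : AntitoneOn φ (Icc a b)) : deriv φ a ≤ 0 := by
  by_cases hd : DifferentiableAt ℝ φ a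
  · exact hd.hasDerivAt.hasDerivWithinAt.nonpos_of_antitoneOn
      (uniqueDiffWithinAt_iff_accPt.1 (uniqueDiffOn_Icc hab a (left_mem_Icc.2 hab.le))) hφ
  · rw [deriv_zero_of_not_differentiableAt hd]

theorem deriv_pos_of_strictMonoOn_of_antitoneOn {f : ℝ → ℝ} {x v : ℝ} (hxv : x < v)
    (hf : ∀ w ∈ Icc x v, DifferentiableAt ℝ f w) (hmono : StrictMonoOn f (Icc x v))
    (hanti : AntitoneOn (deriv f) (Icc x v)) : 0 < deriv f x := by
  have hx := left_mem_Icc.2 hxv.le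
  obtain ⟨c, hc, hslope⟩ := exists_deriv_eq_slope f hxv
    (fun w hw => (hf w hw).continuousAt.continuousWithinAt)
    (fun w hw => (hf w (Ioo_subset_Icc_self hw)).differentiableWithinAt)
  have hc_pos : 0 < deriv f c := by
    rw [hslope]
    exact div_pos (sub_pos.2 (hmono hx (right_mem_Icc.2 hxv.le) hxv)) (sub_pos.2 hxv)
  exact hc_pos.trans_le (hanti hx (Ioo_subset_Icc_self hc) hc.1.le)

theorem convex_setOf_le_coe_lt (x : ℝ) (U : EReal) :
    Convex ℝ {w : ℝ | x ≤ w ∧ (w : EReal) < U} :=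
  convex_iff_ordConnected.2 ⟨fun _ hy _ hz _ hw =>
    ⟨hy.1.trans hw.1, (EReal.coe_le_coe_iff.2 hw.2).trans_lt hz.2⟩⟩

theorem exists_Icc_subset_setOf_le_coe_lt {x y : ℝ} {U : EReal} (hy : x ≤ y)
    (hyU : (y : EReal) < U) :
    ∃ v, y < v ∧ Icc y v ⊆ {w : ℝ | x ≤ w ∧ (w : EReal) < U} := by
  obtain ⟨v, hyv, hvU⟩ := EReal.lt_iff_exists_real_btwn.1 hyU
  exact ⟨v, EReal.coe_lt_coe_iff.1 hyv, fun w hw =>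
    ⟨hy.trans hw.1, (EReal.coe_le_coe_iff.2 hw.2).trans_lt hvU⟩⟩

theorem second_coeff_nonpos_iff {δ : ℝ} (hδ : δ ≠ 0) (y₀ y₁ y₂ : ℝ) :
    -6 * y₀ / δ ^ 2 + 6 * y₁ / δ - 2 * y₂ ≤ 0 ↔ y₂ ≥ 3 / δ * (y₁ - y₀ / δ) := by
  have : -6 * y₀ / δ ^ 2 + 6 * y₁ / δ - 2 * y₂ = -2 * (y₂ - 3 / δ * (y₁ - y₀ / δ)) := by
    field_simp
    ring
  rw [this, ge_iff_le, ← sub_nonneg]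
  constructor <;> intro h <;> linarith

section Smoothing

variable {f g : ℝ → ℝ} {U : EReal} {δ a b c : ℝ}

theorem smoothing_hasDerivAt_of_le
    (hg : g = fun w => if w ≤ δ then taylorCubic a b c w else f w)
    (h0 : taylorCubic a b c δ = f δ) (h1 : a + b * δ + c / 2 * δ ^ 2 = deriv f δ)
    (hfδ : DifferentiableAt ℝ f δ) {w : ℝ} (hw : w ≤ δ) :
    HasDerivAt g (a + b * w + c / 2 * w ^ 2) w := by
  subst hg
  refine hasDerivAt_ite_le (fun _ => hasDerivAt_taylorCubic a b c w) (fun hδw => ?_) h0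
  obtain rfl := le_antisymm hw hδw
  exact h1 ▸ hfδ.hasDerivAt

theorem smoothing_hasDerivAt_of_ge
    (hg : g = fun w => if w ≤ δ then taylorCubic a b c w else f w)
    (h0 : taylorCubic a b c δ = f δ) (h1 : a + b * δ + c / 2 * δ ^ 2 = deriv f δ)
    {w : ℝ} (hw : δ ≤ w) (hfw : DifferentiableAt ℝ f w) : HasDerivAt g (deriv f w) w := by
  subst hg
  refine hasDerivAt_ite_le (fun hwδ => ?_) (fun _ => hfw.hasDerivAt) h0
  obtain rfl := le_antisymm hwδ hw
  exact h1 ▸ hasDerivAt_taylorCubic a b c w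

theorem nonpos_of_smoothing_concaveOn (hδ : 0 < δ) (hδU : (δ : EReal) < U)
    (hg : g = fun w => if w ≤ δ then taylorCubic a b c w else f w)
    (hconc : ConcaveOn ℝ {w : ℝ | 0 ≤ w ∧ (w : EReal) < U} g) : b ≤ 0 := by
  refine nonpos_of_concaveOn_taylorCubic (a := a) (c := c) hδ
    ((hconc.subset (fun w hw => ?_) (convex_Icc 0 δ)).congr fun w hw => ?_)
  · exact ⟨hw.1, (EReal.coe_le_coe_iff.2 hw.2).trans_lt hδU⟩
  · rw [hg]
    exact if_pos hw.2

theorem antitoneOn_deriv_smoothing (hδ : 0 < δ) (hδU : (δ : EReal) < U)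
    (hdiff : ∀ w : ℝ, δ ≤ w → (w : EReal) < U → DifferentiableAt ℝ f w)
    (hanti : AntitoneOn (deriv f) {w : ℝ | δ ≤ w ∧ (w : EReal) < U})
    (hg : g = fun w => if w ≤ δ then taylorCubic a b c w else f w)
    (h0 : taylorCubic a b c δ = f δ) (h1 : a + b * δ + c / 2 * δ ^ 2 = deriv f δ)
    (h2 : b + c * δ = deriv (deriv f) δ) (hb : b ≤ 0) :
    AntitoneOn (deriv g) {w : ℝ | 0 ≤ w ∧ (w : EReal) < U} := by
  have hbc : b + c * δ ≤ 0 := by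
    obtain ⟨v, hδv, hsub⟩ := exists_Icc_subset_setOf_le_coe_lt le_rfl hδU
    exact h2 ▸ deriv_nonpos_of_antitoneOn_Icc hδv (hanti.mono hsub)
  have hleft : AntitoneOn (deriv g) (Icc 0 δ) :=
    (antitoneOn_quadratic_Icc hb hbc).congr fun w hw =>
      ((smoothing_hasDerivAt_of_le hg h0 h1 (hdiff δ le_rfl hδU) hw.2).deriv).symm
  have hright : AntitoneOn (deriv g) {w : ℝ | δ ≤ w ∧ (w : EReal) < U} :=
    hanti.congr fun w hw =>
      ((smoothing_hasDerivAt_of_ge hg h0 h1 hw.1 (hdiff w hw.1 hw.2)).deriv).symm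
  refine (hleft.union_right hright ⟨right_mem_Icc.2 hδ.le, fun _ h => h.2⟩
    ⟨⟨le_rfl, hδU⟩, fun _ h => h.1⟩).mono fun w hw => ?_
  rcases le_total w δ with h | h
  exacts [Or.inl ⟨hw.1, h⟩, Or.inr ⟨h, hw.2⟩]

theorem smoothing_strictMonoOn_concaveOn (hδ : 0 < δ) (hδU : (δ : EReal) < U)
    (hmono : StrictMonoOn f {w : ℝ | δ ≤ w ∧ (w : EReal) < U})
    (hdiff : ∀ w : ℝ, δ ≤ w → (w : EReal) < U → DifferentiableAt ℝ f w)
    (hanti : AntitoneOn (deriv f) {w : ℝ | δ ≤ w ∧ (w : EReal) < U})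
    (hg : g = fun w => if w ≤ δ then taylorCubic a b c w else f w)
    (h0 : taylorCubic a b c δ = f δ) (h1 : a + b * δ + c / 2 * δ ^ 2 = deriv f δ)
    (h2 : b + c * δ = deriv (deriv f) δ) (hb : b ≤ 0) :
    StrictMonoOn g {w : ℝ | 0 ≤ w ∧ (w : EReal) < U} ∧
      ConcaveOn ℝ {w : ℝ | 0 ≤ w ∧ (w : EReal) < U} g := by
  set S := {w : ℝ | 0 ≤ w ∧ (w : EReal) < U}
  have hanti_g := antitoneOn_deriv_smoothing hδ hδU hdiff hanti hg h0 h1 h2 hb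
  have hdiffg : ∀ w ∈ S, DifferentiableAt ℝ g w := fun w hw => by
    rcases le_total w δ with h | h
    exacts [(smoothing_hasDerivAt_of_le hg h0 h1 (hdiff δ le_rfl hδU) h).differentiableAt,
      (smoothing_hasDerivAt_of_ge hg h0 h1 h (hdiff w h hw.2)).differentiableAt]
  have hpos : ∀ w ∈ S, 0 < deriv g w := by
    intro w hw
    set v := max w δ
    have hvU : (v : EReal) < U := by
      rw [Monotone.map_max EReal.coe_strictMono.monotone]
      exact max_lt hw.2 hδU
    obtain ⟨v', hvv', hsub⟩ := exists_Icc_subset_setOf_le_coe_lt (le_max_right w δ) hvU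
    calc 0 < deriv f v := deriv_pos_of_strictMonoOn_of_antitoneOn hvv'
          (fun u hu => hdiff u (hsub hu).1 (hsub hu).2) (hmono.mono hsub) (hanti.mono hsub)
      _ = deriv g v := ((smoothing_hasDerivAt_of_ge hg h0 h1 (le_max_right w δ)
          (hdiff v (le_max_right w δ) hvU)).deriv).symm
      _ ≤ deriv g w := hanti_g hw ⟨hδ.le.trans (le_max_right w δ), hvU⟩ (le_max_left w δ)
  have hconv : Convex ℝ S := convex_setOf_le_coe_lt 0 U
  have hcont : ContinuousOn g S := fun w hw => (hdiffg w hw).continuousAt.continuousWithinAt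
  exact ⟨strictMonoOn_of_deriv_pos hconv hcont fun w hw => hpos w (interior_subset hw),
    (hanti_g.mono interior_subset).concaveOn_of_deriv hconv hcont fun w hw =>
      (hdiffg w (interior_subset hw)).differentiableWithinAt⟩

end Smoothing

theorem stmt_3_general (f : ℝ → ℝ) (U : EReal) (δ : ℝ) (hδ : 0 < δ) (hδU : (δ : EReal) < U)
    (hmono : StrictMonoOn f {w : ℝ | δ ≤ w ∧ (w : EReal) < U})
    (hdiff : ∀ w : ℝ, δ ≤ w → (w : EReal) < U → DifferentiableAt ℝ f w)
    (hanti : AntitoneOn (deriv f) {w : ℝ | δ ≤ w ∧ (w : EReal) < U})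
    (g : ℝ → ℝ)
    (hg : g = fun w =>
      if w ≤ δ then
        (3 * f δ / δ - 2 * deriv f δ + δ * deriv (deriv f) δ / 2) * w +
        (-6 * f δ / δ ^ 2 + 6 * deriv f δ / δ - 2 * deriv (deriv f) δ) / 2 * w ^ 2 +
        (6 * f δ / δ ^ 3 - 6 * deriv f δ / δ ^ 2 + 3 * deriv (deriv f) δ / δ) / 6 * w ^ 3
      else f w) :
    (StrictMonoOn g {w : ℝ | 0 ≤ w ∧ (w : EReal) < U} ∧
      ConcaveOn ℝ {w : ℝ | 0 ≤ w ∧ (w : EReal) < U} g) ↔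
      deriv (deriv f) δ ≥ 3 / δ * (deriv f δ - f δ / δ) := by
  rw [← second_coeff_nonpos_iff hδ.ne']
  refine ⟨fun h => nonpos_of_smoothing_concaveOn hδ hδU hg h.2,
    smoothing_strictMonoOn_concaveOn hδ hδU hmono hdiff hanti hg ?_ ?_ ?_⟩
  · simp only [taylorCubic]
    field_simp
    ring
  all_goals field_simp; ring

theorem stmt_3 (f : ℝ → ℝ) (U : EReal) (δ : ℝ) (hδ : 0 < δ) (hδU : (δ : EReal) < U)
    (hf0 : f 0 = 0)
    (hf1 : DifferentiableAt ℝ f δ) (hf2 : DifferentiableAt ℝ (deriv f) δ)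
    (hmono : StrictMonoOn f {w : ℝ | δ ≤ w ∧ (w : EReal) < U})
    (hdiff : ∀ w : ℝ, δ ≤ w → (w : EReal) < U → DifferentiableAt ℝ f w)
    (hanti : AntitoneOn (deriv f) {w : ℝ | δ ≤ w ∧ (w : EReal) < U})
    (g : ℝ → ℝ)
    (hg : g = fun w =>
      if w ≤ δ then
        (3 * f δ / δ - 2 * deriv f δ + δ * deriv (deriv f) δ / 2) * w +
        (-6 * f δ / δ ^ 2 + 6 * deriv f δ / δ - 2 * deriv (deriv f) δ) / 2 * w ^ 2 +
        (6 * f δ / δ ^ 3 - 6 * deriv f δ / δ ^ 2 + 3 * deriv (deriv f) δ / δ) / 6 * w ^ 3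
      else f w) :
    (StrictMonoOn g {w : ℝ | 0 ≤ w ∧ (w : EReal) < U} ∧
      ConcaveOn ℝ {w : ℝ | 0 ≤ w ∧ (w : EReal) < U} g) ↔
      deriv (deriv f) δ ≥ 3 / δ * (deriv f δ - f δ / δ) :=
  stmt_3_general f U δ hδ hδU hmono hdiff hanti g hg
end

section
/- If f is continuous on [0,δ], thrice differentiable on (0,δ], f(0) = 0, and f''' is strictly decreasing on (0,δ], then the right-limit of f' at 0 is strictly greater than g₁ = g'(0), where g is the δ-smoothing of f. -/
/-!
Put `C = f`, `B = f'`, `A = f''`, `ρ = f'''` and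
`Θ(w) = 3C(w) + (δ - 3w)B(w) + (3w²/2 - δw)A(w) - ρ(2δ/3)(w³/2 - δw²/2)`.
Integrating by parts, `Θ'(w) = (3w²/2 - δw)(ρ(w) - ρ(2δ/3))`: the kernel `3w²/2 - δw` changes sign
only at `2δ/3`, exactly where `ρ - ρ(2δ/3)` does, so `Θ` is strictly decreasing on `(0, δ]`.
Now `Θ(δ) = δ g₁`, while `Θ(0⁺) = 3f(0) + δ f'(0⁺)` because `w f''(w) → 0`: since `ρ ≥ ρ(δ)`,
`f'' - ρ(δ) w` is monotone, and a function with a finite limit at `0⁺` and monotone derivative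
has `w · derivative → 0`. The same convexity gives `f'(w) ≥ f'(δ) - (δ - w) f''(δ) + ρ(δ)(δ - w)²/2`,
which rules out `f'(0⁺) = -∞`.
-/

open Set Filter Topology

lemma monotoneOn_of_forall_hasDerivAt_nonneg {D : Set ℝ} (hD : Convex ℝ D) {f f' : ℝ → ℝ}
    (hf : ∀ x ∈ D, HasDerivAt f (f' x) x) (hf' : ∀ x ∈ interior D, 0 ≤ f' x) :
    MonotoneOn f D :=
  monotoneOn_of_hasDerivWithinAt_nonneg hD (fun x hx ↦ (hf x hx).continuousAt.continuousWithinAt)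
    (fun x hx ↦ (hf x (interior_subset hx)).hasDerivWithinAt) hf'

lemma strictAntiOn_of_forall_hasDerivAt_neg {D : Set ℝ} (hD : Convex ℝ D) {f f' : ℝ → ℝ}
    (hf : ∀ x ∈ D, HasDerivAt f (f' x) x) (hf' : ∀ x ∈ interior D, f' x < 0) :
    StrictAntiOn f D :=
  strictAntiOn_of_hasDerivWithinAt_neg hD (fun x hx ↦ (hf x hx).continuousAt.continuousWithinAt)
    (fun x hx ↦ (hf x (interior_subset hx)).hasDerivWithinAt) hf'

lemma tendsto_const_mul_nhdsGT_zero {c : ℝ} (hc : 0 < c) :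
    Tendsto (fun w ↦ c * w) (𝓝[>] 0) (𝓝[>] 0) :=
  tendsto_iff_comap.2 (comap_mulLeft_nhdsGT_zero hc).ge

section MonotoneDeriv

variable {B A : ℝ → ℝ}

lemma mul_le_sub_le_mul_of_hasDerivAt_of_monotoneOn {s : Set ℝ} (hs : s.OrdConnected)
    (hB : ∀ w ∈ s, HasDerivAt B (A w) w) (hA : MonotoneOn A s) {a b : ℝ} (ha : a ∈ s)
    (hb : b ∈ s) (hab : a < b) :
    (b - a) * A a ≤ B b - B a ∧ B b - B a ≤ (b - a) * A b := by
  have hIcc : Icc a b ⊆ s := hs.out ha hb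
  obtain ⟨ξ, hξ, hslope⟩ := exists_hasDerivAt_eq_slope B A hab
    (fun x hx ↦ (hB x (hIcc hx)).continuousAt.continuousWithinAt)
    (fun x hx ↦ hB x (hIcc (Ioo_subset_Icc_self hx)))
  have hξs : ξ ∈ s := hIcc (Ioo_subset_Icc_self hξ)
  have hdiff : B b - B a = (b - a) * A ξ := by
    rw [hslope]; field_simp [(sub_pos.2 hab).ne']
  rw [hdiff]
  exact ⟨mul_le_mul_of_nonneg_left (hA ha hξs hξ.1.le) (sub_pos.2 hab).le,
    mul_le_mul_of_nonneg_left (hA hξs hb hξ.2.le) (sub_pos.2 hab).le⟩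

lemma tendsto_mul_of_hasDerivAt_of_monotoneOn {δ B₀ : ℝ} (hδ : 0 < δ)
    (hB : ∀ w ∈ Ioo 0 δ, HasDerivAt B (A w) w) (hA : MonotoneOn A (Ioo 0 δ))
    (hB₀ : Tendsto B (𝓝[>] 0) (𝓝 B₀)) :
    Tendsto (fun w ↦ w * A w) (𝓝[>] 0) (𝓝 0) := by
  have hbounds : ∀ w ∈ Ioo 0 (δ / 2),
      2 * (B w - B (2⁻¹ * w)) ≤ w * A w ∧ w * A w ≤ B (2 * w) - B w := by
    intro w ⟨hw₀, hw⟩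
    have hw' : w ∈ Ioo 0 δ := ⟨hw₀, by linarith⟩
    have h₁ := (mul_le_sub_le_mul_of_hasDerivAt_of_monotoneOn ordConnected_Ioo hB hA
      (⟨by positivity, by linarith⟩ : 2⁻¹ * w ∈ Ioo 0 δ) hw' (by linarith)).2
    have h₂ := (mul_le_sub_le_mul_of_hasDerivAt_of_monotoneOn ordConnected_Ioo hB hA
      hw' (⟨by positivity, by linarith⟩ : 2 * w ∈ Ioo 0 δ) (by linarith)).1
    constructor <;> nlinarith
  have hlim : ∀ c : ℝ, 0 < c → Tendsto (fun w ↦ B w - B (c * w)) (𝓝[>] 0) (𝓝 0) := fun c hc ↦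
    by simpa using hB₀.sub (hB₀.comp (tendsto_const_mul_nhdsGT_zero hc))
  have hev : ∀ᶠ w in 𝓝[>] (0 : ℝ), w ∈ Ioo 0 (δ / 2) := Ioo_mem_nhdsGT (by positivity)
  refine tendsto_of_tendsto_of_tendsto_of_le_of_le' ?_ ?_
    (hev.mono fun w hw ↦ (hbounds w hw).1) (hev.mono fun w hw ↦ (hbounds w hw).2)
  · simpa using (hlim 2⁻¹ (by norm_num)).const_mul 2
  · simpa using (hlim 2 two_pos).neg

end MonotoneDeriv

section LowerBoundedSecondDeriv

variable {B A ρ : ℝ → ℝ} {δ m : ℝ}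

lemma hasDerivAt_sub_mul_sq_div_two {w : ℝ} (hB : HasDerivAt B (A w) w) :
    HasDerivAt (fun x ↦ B x - m * x ^ 2 / 2) (A w - m * w) w :=
  (hB.sub (((hasDerivAt_pow 2 w).const_mul m).div_const 2)).congr_deriv (by push_cast; ring)

lemma monotoneOn_sub_mul_of_hasDerivAt {D : Set ℝ} (hD : Convex ℝ D)
    (hA : ∀ w ∈ D, HasDerivAt A (ρ w) w) (hρ : ∀ w ∈ D, m ≤ ρ w) :
    MonotoneOn (fun w ↦ A w - m * w) D := by
  refine monotoneOn_of_forall_hasDerivAt_nonneg hD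
    (fun w hw ↦ (hA w hw).sub ((hasDerivAt_id' w).const_mul m)) fun w hw ↦ ?_
  linarith [hρ w (interior_subset hw)]

lemma tendsto_mul_of_hasDerivAt_of_le {B₀ : ℝ} (hδ : 0 < δ)
    (hB : ∀ w ∈ Ioc 0 δ, HasDerivAt B (A w) w) (hA : ∀ w ∈ Ioc 0 δ, HasDerivAt A (ρ w) w)
    (hρ : ∀ w ∈ Ioc 0 δ, m ≤ ρ w) (hB₀ : Tendsto B (𝓝[>] 0) (𝓝 B₀)) :
    Tendsto (fun w ↦ w * A w) (𝓝[>] 0) (𝓝 0) := by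
  have hsq : Tendsto (fun w : ℝ ↦ m * w ^ 2) (𝓝[>] 0) (𝓝 0) := by
    apply tendsto_nhdsWithin_of_tendsto_nhds
    simpa using ((continuous_pow 2).const_mul m).tendsto 0
  have hshift := tendsto_mul_of_hasDerivAt_of_monotoneOn hδ
    (fun w hw ↦ hasDerivAt_sub_mul_sq_div_two (hB w (Ioo_subset_Ioc_self hw)))
    ((monotoneOn_sub_mul_of_hasDerivAt (convex_Ioc 0 δ) hA hρ).mono Ioo_subset_Ioc_self)
    (by simpa using hB₀.sub (hsq.div_const 2))
  convert hshift.add hsq using 2 with w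
  · ring
  · simp

lemma exists_forall_le_of_hasDerivAt_of_le
    (hB : ∀ w ∈ Ioc 0 δ, HasDerivAt B (A w) w) (hA : ∀ w ∈ Ioc 0 δ, HasDerivAt A (ρ w) w)
    (hρ : ∀ w ∈ Ioc 0 δ, m ≤ ρ w) : ∃ M, ∀ w ∈ Ioc 0 δ, M ≤ B w := by
  refine ⟨B δ - δ * |A δ| - δ ^ 2 * |m|, fun w hw ↦ ?_⟩
  have hδ : δ ∈ Ioc 0 δ := ⟨hw.1.trans_le hw.2, le_rfl⟩
  have htaylor : B δ - (δ - w) * A δ + m * (δ - w) ^ 2 / 2 ≤ B w := by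
    rcases hw.2.lt_or_eq with hwδ | rfl
    · have := (mul_le_sub_le_mul_of_hasDerivAt_of_monotoneOn ordConnected_Ioc
        (fun x hx ↦ hasDerivAt_sub_mul_sq_div_two (m := m) (hB x hx))
        (monotoneOn_sub_mul_of_hasDerivAt (convex_Ioc 0 δ) hA hρ) hw hδ hwδ).2
      nlinarith
    · simp
  have hA' : (δ - w) * A δ ≤ δ * |A δ| := by
    nlinarith [le_abs_self (A δ), abs_nonneg (A δ), hw.1, hw.2]
  have hm' : -(δ ^ 2 * |m|) ≤ m * (δ - w) ^ 2 / 2 := by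
    have hsq : (δ - w) ^ 2 ≤ δ ^ 2 := by nlinarith [hw.1, hw.2]
    nlinarith [mul_le_mul_of_nonneg_right (neg_abs_le m) (sq_nonneg (δ - w)),
      mul_le_mul_of_nonneg_left hsq (abs_nonneg m), mul_nonneg (abs_nonneg m) (sq_nonneg δ)]
  linarith

end LowerBoundedSecondDeriv

section PeanoKernel

variable {C B A ρ : ℝ → ℝ} {δ c : ℝ}

noncomputable def kernelPrimitive (C B A : ℝ → ℝ) (δ c w : ℝ) : ℝ :=
  3 * C w + (δ - 3 * w) * B w + (3 * w ^ 2 / 2 - δ * w) * A w - c * (w ^ 3 / 2 - δ * w ^ 2 / 2)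

lemma hasDerivAt_kernelPrimitive {w : ℝ} (hC : HasDerivAt C (B w) w) (hB : HasDerivAt B (A w) w)
    (hA : HasDerivAt A (ρ w) w) :
    HasDerivAt (kernelPrimitive C B A δ c) ((3 * w ^ 2 / 2 - δ * w) * (ρ w - c)) w := by
  have hlin := ((hasDerivAt_id' w).const_mul 3).const_sub δ
  have hquad := (((hasDerivAt_pow 2 w).const_mul 3).div_const 2).sub
    ((hasDerivAt_id' w).const_mul δ)
  have hcub := (((hasDerivAt_pow 3 w).div_const 2).sub
    (((hasDerivAt_pow 2 w).const_mul δ).div_const 2)).const_mul c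
  exact ((((hC.const_mul 3).add (hlin.mul hB)).add (hquad.mul hA)).sub hcub).congr_deriv
    (by simp only [Pi.sub_apply]; push_cast; ring)

lemma kernelPrimitive_self :
    kernelPrimitive C B A δ c δ = 3 * C δ - 2 * δ * B δ + δ ^ 2 / 2 * A δ := by
  unfold kernelPrimitive
  ring

lemma tendsto_kernelPrimitive {C₀ B₀ : ℝ} (hC₀ : Tendsto C (𝓝[>] 0) (𝓝 C₀))
    (hB₀ : Tendsto B (𝓝[>] 0) (𝓝 B₀)) (hA₀ : Tendsto (fun w ↦ w * A w) (𝓝[>] 0) (𝓝 0)) :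
    Tendsto (kernelPrimitive C B A δ c) (𝓝[>] 0) (𝓝 (3 * C₀ + δ * B₀)) := by
  have hpoly : ∀ p : ℝ → ℝ, Continuous p → Tendsto p (𝓝[>] 0) (𝓝 (p 0)) := fun p hp ↦
    (hp.tendsto 0).mono_left nhdsWithin_le_nhds
  have hlin := hpoly (fun w ↦ δ - 3 * w) (by fun_prop)
  have hquad := hpoly (fun w ↦ 3 * w / 2 - δ) (by fun_prop)
  have hcub := hpoly (fun w ↦ c * (w ^ 3 / 2 - δ * w ^ 2 / 2)) (by fun_prop)
  convert (((hC₀.const_mul 3).add (hlin.mul hB₀)).add (hquad.mul hA₀)).sub hcub using 2 with w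
  · unfold kernelPrimitive
    ring
  · simp

lemma strictAntiOn_kernelPrimitive (hδ : 0 < δ) (hC : ∀ w ∈ Ioc 0 δ, HasDerivAt C (B w) w)
    (hB : ∀ w ∈ Ioc 0 δ, HasDerivAt B (A w) w) (hA : ∀ w ∈ Ioc 0 δ, HasDerivAt A (ρ w) w)
    (hρ : StrictAntiOn ρ (Ioc 0 δ)) :
    StrictAntiOn (kernelPrimitive C B A δ (ρ (2 * δ / 3))) (Ioc 0 δ) := by
  have hmid : 2 * δ / 3 ∈ Ioc 0 δ := ⟨by positivity, by linarith⟩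
  have hderiv : ∀ w ∈ Ioc 0 δ, HasDerivAt (kernelPrimitive C B A δ (ρ (2 * δ / 3)))
      ((3 * w ^ 2 / 2 - δ * w) * (ρ w - ρ (2 * δ / 3))) w := fun w hw ↦
    hasDerivAt_kernelPrimitive (hC w hw) (hB w hw) (hA w hw)
  have hleft : StrictAntiOn (kernelPrimitive C B A δ (ρ (2 * δ / 3))) (Ioc 0 (2 * δ / 3)) := by
    refine strictAntiOn_of_forall_hasDerivAt_neg (convex_Ioc _ _)
      (fun w hw ↦ hderiv w ⟨hw.1, hw.2.trans hmid.2⟩) fun w hw ↦ ?_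
    rw [interior_Ioc] at hw
    refine mul_neg_of_neg_of_pos (by nlinarith [hw.1, hw.2]) (sub_pos.2 ?_)
    exact hρ ⟨hw.1, hw.2.le.trans hmid.2⟩ hmid hw.2
  have hright : StrictAntiOn (kernelPrimitive C B A δ (ρ (2 * δ / 3))) (Icc (2 * δ / 3) δ) := by
    refine strictAntiOn_of_forall_hasDerivAt_neg (convex_Icc _ _)
      (fun w hw ↦ hderiv w ⟨hmid.1.trans_le hw.1, hw.2⟩) fun w hw ↦ ?_
    rw [interior_Icc] at hw
    refine mul_neg_of_pos_of_neg (by nlinarith [hw.1, hw.2]) (sub_neg.2 ?_)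
    exact hρ hmid ⟨hmid.1.trans hw.1, hw.2.le⟩ hw.1
  simpa only [Ioc_union_Icc_eq_Ioc hmid.1 hmid.2] using
    hleft.union hright (isGreatest_Ioc hmid.1) (isLeast_Icc hmid.2)

theorem lt_three_mul_add_mul_of_strictAntiOn {C₀ B₀ : ℝ} (hδ : 0 < δ)
    (hC : ∀ w ∈ Ioc 0 δ, HasDerivAt C (B w) w) (hB : ∀ w ∈ Ioc 0 δ, HasDerivAt B (A w) w)
    (hA : ∀ w ∈ Ioc 0 δ, HasDerivAt A (ρ w) w) (hρ : StrictAntiOn ρ (Ioc 0 δ))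
    (hC₀ : Tendsto C (𝓝[>] 0) (𝓝 C₀)) (hB₀ : Tendsto B (𝓝[>] 0) (𝓝 B₀)) :
    3 * C δ - 2 * δ * B δ + δ ^ 2 / 2 * A δ < 3 * C₀ + δ * B₀ := by
  have hρδ : ∀ w ∈ Ioc 0 δ, ρ δ ≤ ρ w := fun w hw ↦ hρ.antitoneOn hw ⟨hδ, le_rfl⟩ hw.2
  have hΘ := strictAntiOn_kernelPrimitive hδ hC hB hA hρ
  have hlim : Tendsto (kernelPrimitive C B A δ (ρ (2 * δ / 3))) (𝓝[>] 0) (𝓝 (3 * C₀ + δ * B₀)) :=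
    tendsto_kernelPrimitive hC₀ hB₀ (tendsto_mul_of_hasDerivAt_of_le hδ hB hA hρδ hB₀)
  have hhalf : δ / 2 ∈ Ioc 0 δ := ⟨by positivity, by linarith⟩
  rw [← kernelPrimitive_self (c := ρ (2 * δ / 3))]
  calc _ < kernelPrimitive C B A δ (ρ (2 * δ / 3)) (δ / 2) :=
        hΘ hhalf ⟨hδ, le_rfl⟩ (by linarith)
    _ ≤ 3 * C₀ + δ * B₀ := by
        refine ge_of_tendsto hlim ?_
        filter_upwards [Ioo_mem_nhdsGT hhalf.1] with w hw
        exact (hΘ ⟨hw.1, hw.2.le.trans hhalf.2⟩ hhalf hw.2).le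

end PeanoKernel

theorem stmt_5 (f : ℝ → ℝ) (δ : ℝ) (hδ : 0 < δ) (hf0 : f 0 = 0)
    (hcont : ContinuousOn f (Set.Icc 0 δ))
    (hdiff : ∀ w ∈ Set.Ioc (0:ℝ) δ, DifferentiableAt ℝ f w ∧
      DifferentiableAt ℝ (deriv f) w ∧ DifferentiableAt ℝ (deriv (deriv f)) w)
    (hanti : StrictAntiOn (deriv (deriv (deriv f))) (Set.Ioc 0 δ))
    (L : EReal)
    (hL : Filter.Tendsto (fun w : ℝ => (((deriv f w : ℝ) : EReal)))
      (nhdsWithin 0 (Set.Ioi 0)) (nhds L)) :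
    ((3 * f δ / δ - 2 * deriv f δ + δ * deriv (deriv f) δ / 2 : ℝ) : EReal) < L := by
  have hC (w) (hw : w ∈ Ioc 0 δ) : HasDerivAt f (deriv f w) w := (hdiff w hw).1.hasDerivAt
  have hB (w) (hw : w ∈ Ioc 0 δ) : HasDerivAt (deriv f) (deriv (deriv f) w) w :=
    (hdiff w hw).2.1.hasDerivAt
  have hA (w) (hw : w ∈ Ioc 0 δ) : HasDerivAt (deriv (deriv f)) (deriv (deriv (deriv f)) w) w :=
    (hdiff w hw).2.2.hasDerivAt
  induction L using EReal.rec with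
  | bot =>
    obtain ⟨M, hM⟩ := exists_forall_le_of_hasDerivAt_of_le hB hA
      fun w hw ↦ hanti.antitoneOn hw ⟨hδ, le_rfl⟩ hw.2
    have hM_le : (M : EReal) ≤ ⊥ := ge_of_tendsto hL <| by
      filter_upwards [Ioc_mem_nhdsGT hδ] with w hw
      exact EReal.coe_le_coe_iff.2 (hM w hw)
    exact absurd hM_le (EReal.bot_lt_coe M).not_ge
  | coe ℓ =>
    have hf : Tendsto f (𝓝[>] 0) (𝓝 0) := by
      simpa only [hf0] using
        ((hcont 0 ⟨le_rfl, hδ.le⟩).mono_of_mem_nhdsWithin (Icc_mem_nhdsGT hδ)).tendsto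
    have key := lt_three_mul_add_mul_of_strictAntiOn hδ hC hB hA hanti hf (EReal.tendsto_coe.1 hL)
    rw [EReal.coe_lt_coe_iff, ← mul_lt_mul_iff_left₀ hδ]
    field_simp
    linarith
  | top => exact EReal.coe_lt_top _
end

section
/- If f is continuous on [0,δ], thrice differentiable on (0,δ], f(0) = 0, and f''' is strictly decreasing on (0,δ], then lim_{w→0⁺} f''(w) < g₂ = g''(0), where g₂ = -6f(δ)/δ² + 6f'(δ)/δ - 2f''(δ). -/
/-!
Let `g` be the cubic with `g 0 = 0` that agrees with `f` to second order at `δ`, and put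
`E = f - g`. Then `E 0 = E δ = 0`, `E' δ = E'' δ = 0` and `E'''` is strictly decreasing, so `E''`
is strictly concave on `(0, δ]`. If `E''` were positive on `(0, δ)`, then `E'` would increase to
`E' δ = 0` and `E` would strictly decrease from `E 0` to `E δ`, which is absurd. Hence `E''` takes
a value `≤ 0 = E'' δ` inside the interval, and concavity then keeps `E''` below a negative constant
near `0⁺`; that is, the limit of `f''` at `0⁺` lies strictly below `g'' 0`.
-/

open Filter Set Topology

section Concave

variable {φ : ℝ → ℝ}

lemma StrictConcaveOn.apply_lt_of_apply_le {s : Set ℝ} (hφ : StrictConcaveOn ℝ s φ) {x y z : ℝ}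
    (hx : x ∈ s) (hz : z ∈ s) (hxy : x < y) (hyz : y < z) (h : φ y ≤ φ z) : φ x < φ y := by
  have hslope := hφ.slope_anti_adjacent hx hz hxy hyz
  have hright : 0 ≤ (φ z - φ y) / (z - y) := div_nonneg (sub_nonneg.2 h) (sub_pos.2 hyz).le
  have hleft : 0 < (φ y - φ x) / (y - x) := hright.trans_lt hslope
  linarith [(div_pos_iff_of_pos_right (sub_pos.2 hxy)).1 hleft]

lemma StrictConcaveOn.exists_eventually_le_of_apply_le {a b w : ℝ}
    (hφ : StrictConcaveOn ℝ (Ioc a b) φ) (hw : w ∈ Ioo a b) (hφw : φ w ≤ φ b) :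
    ∃ c < φ b, ∀ᶠ u in 𝓝[>] a, φ u ≤ c := by
  obtain ⟨haw, hwb⟩ := hw
  obtain ⟨v, hav, hvw⟩ := exists_between haw
  have hφv : φ v < φ w :=
    hφ.apply_lt_of_apply_le ⟨hav, (hvw.trans hwb).le⟩ ⟨haw.trans hwb, le_rfl⟩ hvw hwb hφw
  refine ⟨φ v, hφv.trans_le hφw, ?_⟩
  filter_upwards [Ioo_mem_nhdsGT hav] with u hu
  exact (hφ.apply_lt_of_apply_le ⟨hu.1, (hu.2.trans (hvw.trans hwb)).le⟩ ⟨haw, hwb.le⟩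
    hu.2 hvw hφv.le).le

end Concave

section SecondDerivative

variable {E E' E'' E''' : ℝ → ℝ} {a b : ℝ}

lemma apply_lt_apply_of_deriv2_pos (hab : a < b) (hE : ContinuousOn E (Icc a b))
    (hE' : ∀ x ∈ Ioo a b, HasDerivAt E (E' x) x) (hE'' : ∀ x ∈ Ioc a b, HasDerivAt E' (E'' x) x)
    (hE'b : E' b = 0) (hpos : ∀ x ∈ Ioo a b, 0 < E'' x) : E b < E a := by
  have hmono : StrictMonoOn E' (Ioc a b) := by
    refine strictMonoOn_of_deriv_pos (convex_Ioc a b)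
      (fun x hx => (hE'' x hx).continuousAt.continuousWithinAt) fun x hx => ?_
    rw [interior_Ioc] at hx
    rw [(hE'' x (Ioo_subset_Ioc_self hx)).deriv]
    exact hpos x hx
  have hanti : StrictAntiOn E (Icc a b) := by
    refine strictAntiOn_of_deriv_neg (convex_Icc a b) hE fun x hx => ?_
    rw [interior_Icc] at hx
    rw [(hE' x hx).deriv, ← hE'b]
    exact hmono (Ioo_subset_Ioc_self hx) (right_mem_Ioc.2 hab) hx.2
  exact hanti (left_mem_Icc.2 hab.le) (right_mem_Icc.2 hab.le) hab

lemma exists_neg_eventually_deriv2_le (hab : a < b) (hE : ContinuousOn E (Icc a b))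
    (hE' : ∀ x ∈ Ioo a b, HasDerivAt E (E' x) x) (hE'' : ∀ x ∈ Ioc a b, HasDerivAt E' (E'' x) x)
    (hE''' : ∀ x ∈ Ioc a b, HasDerivAt E'' (E''' x) x) (hanti : StrictAntiOn E''' (Ioc a b))
    (hEab : E a = E b) (hE'b : E' b = 0) (hE''b : E'' b = 0) :
    ∃ c < 0, ∀ᶠ u in 𝓝[>] a, E'' u ≤ c := by
  have hconc : StrictConcaveOn ℝ (Ioc a b) E'' := by
    refine StrictAntiOn.strictConcaveOn_of_deriv (convex_Ioc a b)
      (fun x hx => (hE''' x hx).continuousAt.continuousWithinAt) ?_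
    rw [interior_Ioc]
    exact (hanti.mono Ioo_subset_Ioc_self).congr fun x hx =>
      (hE''' x (Ioo_subset_Ioc_self hx)).deriv.symm
  by_contra hbound
  have hpos : ∀ x ∈ Ioo a b, 0 < E'' x := by
    intro x hx
    by_contra! hx0
    exact hbound (hE''b ▸ hconc.exists_eventually_le_of_apply_le hx (hE''b ▸ hx0))
  exact (apply_lt_apply_of_deriv2_pos hab hE hE' hE'' hE'b hpos).ne' hEab

end SecondDerivative

def shiftedCubic (x₀ c₀ c₁ c₂ c₃ x : ℝ) : ℝ :=
  c₀ + c₁ * (x - x₀) + c₂ * (x - x₀) ^ 2 + c₃ * (x - x₀) ^ 3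

lemma hasDerivAt_shiftedCubic (x₀ c₀ c₁ c₂ c₃ x : ℝ) :
    HasDerivAt (shiftedCubic x₀ c₀ c₁ c₂ c₃) (shiftedCubic x₀ c₁ (2 * c₂) (3 * c₃) 0 x) x := by
  have h : HasDerivAt (fun y => y - x₀) 1 x := (hasDerivAt_id' x).sub_const x₀
  refine ((((h.const_mul c₁).const_add c₀).add ((h.pow 2).const_mul c₂)).add
    ((h.pow 3).const_mul c₃)).congr_deriv ?_
  simp only [shiftedCubic]
  ring

lemma continuous_shiftedCubic (x₀ c₀ c₁ c₂ c₃ : ℝ) : Continuous (shiftedCubic x₀ c₀ c₁ c₂ c₃) :=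
  continuous_iff_continuousAt.2 fun x => (hasDerivAt_shiftedCubic x₀ c₀ c₁ c₂ c₃ x).continuousAt

theorem stmt_6 (f : ℝ → ℝ) (δ : ℝ) (hδ : 0 < δ) (hf0 : f 0 = 0)
    (hcont : ContinuousOn f (Set.Icc 0 δ))
    (hdiff : ∀ w ∈ Set.Ioc (0:ℝ) δ, DifferentiableAt ℝ f w ∧
      DifferentiableAt ℝ (deriv f) w ∧ DifferentiableAt ℝ (deriv (deriv f)) w)
    (hanti : StrictAntiOn (deriv (deriv (deriv f))) (Set.Ioc 0 δ))
    (L : EReal)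
    (hL : Filter.Tendsto (fun w : ℝ => (((deriv (deriv f) w : ℝ) : EReal)))
      (nhdsWithin 0 (Set.Ioi 0)) (nhds L)) :
    L < ((-6 * f δ / δ ^ 2 + 6 * deriv f δ / δ - 2 * deriv (deriv f) δ : ℝ) : EReal) := by
  -- `a` is the cubic coefficient that makes `g 0 = 0`
  set a := (f δ - δ * deriv f δ + δ ^ 2 / 2 * deriv (deriv f) δ) / δ ^ 3 with ha
  set g := shiftedCubic δ (f δ) (deriv f δ) (deriv (deriv f) δ / 2) a
  obtain ⟨c, hc, hbound⟩ := exists_neg_eventually_deriv2_le (E := fun x => f x - g x) hδ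
    (hcont.sub (continuous_shiftedCubic _ _ _ _ _).continuousOn)
    (fun x hx => (hdiff x (Ioo_subset_Ioc_self hx)).1.hasDerivAt.sub
      (hasDerivAt_shiftedCubic _ _ _ _ _ x))
    (fun x hx => (hdiff x hx).2.1.hasDerivAt.sub (hasDerivAt_shiftedCubic _ _ _ _ _ x))
    (fun x hx => (hdiff x hx).2.2.hasDerivAt.sub (hasDerivAt_shiftedCubic _ _ _ _ _ x))
    (fun x hx y hy hxy => by simpa [shiftedCubic] using hanti hx hy hxy)
    (by simp only [g, shiftedCubic, hf0, ha]; field_simp; ring) (by simp only [shiftedCubic]; ring)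
    (by simp only [shiftedCubic]; ring)
  set g'' := shiftedCubic δ (2 * (deriv (deriv f) δ / 2)) (2 * (3 * a)) (3 * 0) 0
  have hg''0 : g'' 0 = -6 * f δ / δ ^ 2 + 6 * deriv f δ / δ - 2 * deriv (deriv f) δ := by
    simp only [g'', shiftedCubic, ha]
    field_simp
    ring
  have hlim : Tendsto (fun u => ((c + g'' u : ℝ) : EReal)) (𝓝[>] 0) (𝓝 ((c + g'' 0 : ℝ) : EReal)) :=
    ((continuous_coe_real_ereal.comp (continuous_const.add (continuous_shiftedCubic ..))).tendsto
      0).mono_left nhdsWithin_le_nhds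
  have hle : ∀ᶠ u in 𝓝[>] 0, ((deriv (deriv f) u : ℝ) : EReal) ≤ ((c + g'' u : ℝ) : EReal) :=
    hbound.mono fun u hu => EReal.coe_le_coe_iff.2 (by linarith)
  calc L ≤ ((c + g'' 0 : ℝ) : EReal) := le_of_tendsto_of_tendsto hL hlim hle
    _ < _ := EReal.coe_lt_coe_iff.2 (by linarith)
end

section
/- Let f be continuous on [0,U), thrice differentiable on (0,U), with f(0) = 0 and f''' strictly decreasing on (0,U). Then the function δ ↦ g₁(δ) := 3f(δ)/δ - 2f'(δ) + δf''(δ)/2 is strictly decreasing on (0,U). -/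
/-!
Writing `R(δ) = f(δ) - δ f'(δ) + δ² f''(δ)/2 - δ³ f'''(δ)/6`, one computes
`g₁'(δ) = -3 R(δ) / δ²`. Expanding `f` to third order around `δ` and evaluating at `0`
gives `0 = f(0) = R(δ) + δ³ (f'''(δ) - f'''(ξ)) / 6` for some `ξ ∈ (0, δ)`, and
`f'''(ξ) > f'''(δ)` makes `R(δ)` positive. Since `f''` need not extend continuously to `0`,
the remainder estimate is obtained by integrating the sign of the third derivative
three times from `δ` downwards rather than from a Taylor theorem on a closed interval.
-/

open Set

section DerivSign

variable {g g' : ℝ → ℝ} {a b : ℝ}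

theorem strictMonoOn_Icc_of_hasDerivAt_pos (hg : ContinuousOn g (Icc a b))
    (hg' : ∀ x ∈ Ioo a b, HasDerivAt g (g' x) x) (hpos : ∀ x ∈ Ioo a b, 0 < g' x) :
    StrictMonoOn g (Icc a b) :=
  strictMonoOn_of_hasDerivWithinAt_pos (convex_Icc a b) hg
    (by simpa only [interior_Icc] using fun x hx => (hg' x hx).hasDerivWithinAt)
    (by simpa only [interior_Icc] using hpos)

theorem strictMonoOn_Ioc_of_hasDerivAt_pos (hg' : ∀ x ∈ Ioc a b, HasDerivAt g (g' x) x)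
    (hpos : ∀ x ∈ Ioo a b, 0 < g' x) : StrictMonoOn g (Ioc a b) :=
  strictMonoOn_of_hasDerivWithinAt_pos (convex_Ioc a b)
    (fun x hx => (hg' x hx).continuousAt.continuousWithinAt)
    (by simpa only [interior_Ioc] using
      fun x hx => (hg' x (Ioo_subset_Ioc_self hx)).hasDerivWithinAt)
    (by simpa only [interior_Ioc] using hpos)

theorem strictAntiOn_Ioc_of_hasDerivAt_neg (hg' : ∀ x ∈ Ioc a b, HasDerivAt g (g' x) x)
    (hneg : ∀ x ∈ Ioo a b, g' x < 0) : StrictAntiOn g (Ioc a b) :=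
  strictAntiOn_of_hasDerivWithinAt_neg (convex_Ioc a b)
    (fun x hx => (hg' x hx).continuousAt.continuousWithinAt)
    (by simpa only [interior_Ioc] using
      fun x hx => (hg' x (Ioo_subset_Ioc_self hx)).hasDerivWithinAt)
    (by simpa only [interior_Ioc] using hneg)

end DerivSign

theorem lt_cubic_taylor_left_of_lt_third_deriv {f f₁ f₂ f₃ : ℝ → ℝ} {a b : ℝ} (hab : a < b)
    (hf : ContinuousOn f (Icc a b))
    (hf₁ : ∀ x ∈ Ioc a b, HasDerivAt f (f₁ x) x)
    (hf₂ : ∀ x ∈ Ioc a b, HasDerivAt f₁ (f₂ x) x)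
    (hf₃ : ∀ x ∈ Ioc a b, HasDerivAt f₂ (f₃ x) x)
    (hlt : ∀ x ∈ Ioo a b, f₃ b < f₃ x) :
    f a < f b - (b - a) * f₁ b + (b - a) ^ 2 / 2 * f₂ b - (b - a) ^ 3 / 6 * f₃ b := by
  set F₂ : ℝ → ℝ := fun x => f₂ x - f₂ b - (x - b) * f₃ b
  set F₁ : ℝ → ℝ := fun x => f₁ x - f₁ b - (x - b) * f₂ b - (x - b) ^ 2 / 2 * f₃ b
  set F : ℝ → ℝ := fun x =>
    f x - f b - (x - b) * f₁ b - (x - b) ^ 2 / 2 * f₂ b - (x - b) ^ 3 / 6 * f₃ b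
  have hb : b ∈ Ioc a b := right_mem_Ioc.2 hab
  have hF₂ : ∀ x ∈ Ioc a b, HasDerivAt F₂ (f₃ x - f₃ b) x := fun x hx =>
    (((hf₃ x hx).sub_const _).sub (((hasDerivAt_id' x).sub_const b).mul_const _)).congr_deriv
      (by ring)
  have hF₁ : ∀ x ∈ Ioc a b, HasDerivAt F₁ (F₂ x) x := fun x hx =>
    ((((hf₂ x hx).sub_const _).sub (((hasDerivAt_id' x).sub_const b).mul_const _)).sub
      (((((hasDerivAt_id' x).sub_const b).pow 2).div_const 2).mul_const _)).congr_deriv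
      (by simp only [F₂]; ring)
  have hF : ∀ x ∈ Ioc a b, HasDerivAt F (F₁ x) x := fun x hx =>
    (((((hf₁ x hx).sub_const _).sub (((hasDerivAt_id' x).sub_const b).mul_const _)).sub
      (((((hasDerivAt_id' x).sub_const b).pow 2).div_const 2).mul_const _)).sub
      (((((hasDerivAt_id' x).sub_const b).pow 3).div_const 6).mul_const _)).congr_deriv
      (by simp only [F₁]; ring)
  have hF₂_neg : ∀ x ∈ Ioo a b, F₂ x < 0 := fun x hx => by
    simpa [F₂] using strictMonoOn_Ioc_of_hasDerivAt_pos hF₂ (fun y hy => sub_pos.2 (hlt y hy))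
      (Ioo_subset_Ioc_self hx) hb hx.2
  have hF₁_pos : ∀ x ∈ Ioo a b, 0 < F₁ x := fun x hx => by
    simpa [F₁] using strictAntiOn_Ioc_of_hasDerivAt_neg hF₁ hF₂_neg
      (Ioo_subset_Ioc_self hx) hb hx.2
  have hF_cont : ContinuousOn F (Icc a b) := by
    refine (((hf.sub continuousOn_const).sub ?_).sub ?_).sub ?_ <;> fun_prop
  have hFab : F a < F b :=
    strictMonoOn_Icc_of_hasDerivAt_pos hF_cont (fun x hx => hF x (Ioo_subset_Ioc_self hx))
      hF₁_pos (left_mem_Icc.2 hab.le) (right_mem_Icc.2 hab.le) hab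
  have hFb : F b = 0 := by simp [F]
  simp only [F] at hFab
  linarith

theorem hasDerivAt_three_mul_div_sub_two_mul_add_mul_div_two {f f₁ f₂ f₃ : ℝ → ℝ} {δ : ℝ}
    (hδ : δ ≠ 0) (hf₁ : HasDerivAt f (f₁ δ) δ) (hf₂ : HasDerivAt f₁ (f₂ δ) δ)
    (hf₃ : HasDerivAt f₂ (f₃ δ) δ) :
    HasDerivAt (fun x => 3 * f x / x - 2 * f₁ x + x * f₂ x / 2)
      (-3 / δ ^ 2 * (f δ - δ * f₁ δ + δ ^ 2 / 2 * f₂ δ - δ ^ 3 / 6 * f₃ δ)) δ :=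
  ((((hf₁.const_mul 3).div (hasDerivAt_id' δ) hδ).sub (hf₂.const_mul 2)).add
    (((hasDerivAt_id' δ).mul hf₃).div_const 2)).congr_deriv (by field_simp; ring)

theorem stmt_8_general (f : ℝ → ℝ) (U : EReal) (hf0 : f 0 = 0)
    (hcont : ContinuousOn f {w : ℝ | 0 ≤ w ∧ (w : EReal) < U})
    (hdiff : ∀ w : ℝ, 0 < w → (w : EReal) < U → DifferentiableAt ℝ f w ∧
      DifferentiableAt ℝ (deriv f) w ∧ DifferentiableAt ℝ (deriv (deriv f)) w)
    (hanti : StrictAntiOn (deriv (deriv (deriv f))) {w : ℝ | 0 < w ∧ (w : EReal) < U}) :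
    StrictAntiOn (fun δ : ℝ => 3 * f δ / δ - 2 * deriv f δ + δ * deriv (deriv f) δ / 2)
      {δ : ℝ | 0 < δ ∧ (δ : EReal) < U} := by
  set S := {w : ℝ | 0 < w ∧ (w : EReal) < U}
  have hS_open : IsOpen S := isOpen_Ioi.inter (isOpen_Iio.preimage continuous_coe_real_ereal)
  have hIoc_sub : ∀ δ ∈ S, Ioc 0 δ ⊆ S := fun δ hδ x hx =>
    ⟨hx.1, (EReal.coe_le_coe_iff.2 hx.2).trans_lt hδ.2⟩
  have hS_conv : Convex ℝ S := convex_iff_ordConnected.2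
    ⟨fun _ hx δ hδ _ hz => hIoc_sub δ hδ ⟨hx.1.trans_le hz.1, hz.2⟩⟩
  have hf₁ : ∀ x ∈ S, HasDerivAt f (deriv f x) x := fun x hx =>
    (hdiff x hx.1 hx.2).1.hasDerivAt
  have hf₂ : ∀ x ∈ S, HasDerivAt (deriv f) (deriv (deriv f) x) x := fun x hx =>
    (hdiff x hx.1 hx.2).2.1.hasDerivAt
  have hf₃ : ∀ x ∈ S, HasDerivAt (deriv (deriv f)) (deriv (deriv (deriv f)) x) x :=
    fun x hx => (hdiff x hx.1 hx.2).2.2.hasDerivAt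
  have hg : ∀ δ ∈ S, HasDerivAt _ _ δ := fun δ hδ =>
    hasDerivAt_three_mul_div_sub_two_mul_add_mul_div_two hδ.1.ne' (hf₁ δ hδ) (hf₂ δ hδ)
      (hf₃ δ hδ)
  refine strictAntiOn_of_hasDerivWithinAt_neg hS_conv
    (fun δ hδ => (hg δ hδ).continuousAt.continuousWithinAt)
    (by simpa only [hS_open.interior_eq] using fun δ hδ => (hg δ hδ).hasDerivWithinAt) ?_
  rw [hS_open.interior_eq]
  intro δ hδ
  have hR := lt_cubic_taylor_left_of_lt_third_deriv hδ.1
    (hcont.mono fun x hx => ⟨hx.1, (EReal.coe_le_coe_iff.2 hx.2).trans_lt hδ.2⟩)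
    (fun x hx => hf₁ x (hIoc_sub δ hδ hx)) (fun x hx => hf₂ x (hIoc_sub δ hδ hx))
    (fun x hx => hf₃ x (hIoc_sub δ hδ hx))
    (fun x hx => hanti (hIoc_sub δ hδ (Ioo_subset_Ioc_self hx)) hδ hx.2)
  rw [hf0, sub_zero] at hR
  have hδ2 : 0 < δ ^ 2 := pow_pos hδ.1 2
  exact mul_neg_of_neg_of_pos (div_neg_of_neg_of_pos (by norm_num) hδ2) (by linarith)

theorem stmt_8 (f : ℝ → ℝ) (U : EReal) (hU : 0 < U) (hf0 : f 0 = 0)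
    (hcont : ContinuousOn f {w : ℝ | 0 ≤ w ∧ (w : EReal) < U})
    (hdiff : ∀ w : ℝ, 0 < w → (w : EReal) < U → DifferentiableAt ℝ f w ∧
      DifferentiableAt ℝ (deriv f) w ∧ DifferentiableAt ℝ (deriv (deriv f)) w)
    (hanti : StrictAntiOn (deriv (deriv (deriv f))) {w : ℝ | 0 < w ∧ (w : EReal) < U}) :
    StrictAntiOn (fun δ : ℝ => 3 * f δ / δ - 2 * deriv f δ + δ * deriv (deriv f) δ / 2)
      {δ : ℝ | 0 < δ ∧ (δ : EReal) < U} :=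
  stmt_8_general f U hf0 hcont hdiff hanti
end

section
/- Let f be continuous on [0,δ], with f(0) = 0, thrice differentiable on (0,δ], and f''' strictly decreasing on (0,δ]. Then the δ-smoothing g satisfies g(w) < f(w) for all w ∈ (0,δ), provided f ≠ g on (0,δ). -/
theorem stmt_12 (f : ℝ → ℝ) (δ : ℝ) (hδ : 0 < δ) (hf0 : f 0 = 0)
    (hcont : ContinuousOn f (Set.Icc 0 δ))
    (hdiff : ∀ w ∈ Set.Ioc (0:ℝ) δ, DifferentiableAt ℝ f w ∧
      DifferentiableAt ℝ (deriv f) w ∧ DifferentiableAt ℝ (deriv (deriv f)) w)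
    (hanti : StrictAntiOn (deriv (deriv (deriv f))) (Set.Ioc 0 δ))
    (g : ℝ → ℝ)
    (hg : g = fun w =>
      (3 * f δ / δ - 2 * deriv f δ + δ * deriv (deriv f) δ / 2) * w +
      (-6 * f δ / δ ^ 2 + 6 * deriv f δ / δ - 2 * deriv (deriv f) δ) / 2 * w ^ 2 +
      (6 * f δ / δ ^ 3 - 6 * deriv f δ / δ ^ 2 + 3 * deriv (deriv f) δ / δ) / 6 * w ^ 3)
    (hne : ∃ w ∈ Set.Ioo (0:ℝ) δ, f w ≠ g w) :
    ∀ w ∈ Set.Ioo (0:ℝ) δ, g w < f w := by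
  have hδ' : δ ≠ 0 := hδ.ne'
  set A : ℝ := 3 * f δ / δ - 2 * deriv f δ + δ * deriv (deriv f) δ / 2 with hA
  set B : ℝ := (-6 * f δ / δ ^ 2 + 6 * deriv f δ / δ - 2 * deriv (deriv f) δ) / 2 with hB
  set C : ℝ := (6 * f δ / δ ^ 3 - 6 * deriv f δ / δ ^ 2 + 3 * deriv (deriv f) δ / δ) / 6
    with hC
  have hgw : ∀ w, g w = A * w + B * w ^ 2 + C * w ^ 3 := by intro w; rw [hg]
  set h : ℝ → ℝ := fun w => f w - (A * w + B * w ^ 2 + C * w ^ 3) with hh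
  set h1 : ℝ → ℝ := fun w => deriv f w - (A + 2 * B * w + 3 * C * w ^ 2) with hh1
  set h2 : ℝ → ℝ := fun w => deriv (deriv f) w - (2 * B + 6 * C * w) with hh2
  set h3 : ℝ → ℝ := fun w => deriv (deriv (deriv f)) w - 6 * C with hh3
  -- derivative facts
  have Hd : ∀ x ∈ Set.Ioc (0:ℝ) δ, HasDerivAt h (h1 x) x := by
    intro x hx
    have hf' := (hdiff x hx).1.hasDerivAt
    have p1 : HasDerivAt (fun y : ℝ => A * y) A x := by
      simpa using (hasDerivAt_id x).const_mul A
    have p2 : HasDerivAt (fun y : ℝ => B * y ^ 2) (B * (2 * x)) x := by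
      simpa using (hasDerivAt_pow 2 x).const_mul B
    have p3 : HasDerivAt (fun y : ℝ => C * y ^ 3) (C * (3 * x ^ 2)) x := by
      simpa using (hasDerivAt_pow 3 x).const_mul C
    have hp := (p1.add p2).add p3
    rw [show A + B * (2 * x) + C * (3 * x ^ 2) = A + 2 * B * x + 3 * C * x ^ 2 by ring] at hp
    exact hf'.sub hp
  have Hd1 : ∀ x ∈ Set.Ioc (0:ℝ) δ, HasDerivAt h1 (h2 x) x := by
    intro x hx
    have hf' := (hdiff x hx).2.1.hasDerivAt
    have p1 : HasDerivAt (fun y : ℝ => A) 0 x := hasDerivAt_const x A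
    have p2 : HasDerivAt (fun y : ℝ => 2 * B * y) (2 * B) x := by
      simpa using (hasDerivAt_id x).const_mul (2 * B)
    have p3 : HasDerivAt (fun y : ℝ => 3 * C * y ^ 2) (3 * C * (2 * x)) x := by
      simpa using (hasDerivAt_pow 2 x).const_mul (3 * C)
    have hp := (p1.add p2).add p3
    rw [show (0 : ℝ) + 2 * B + 3 * C * (2 * x) = 2 * B + 6 * C * x by ring] at hp
    exact hf'.sub hp
  have Hd2 : ∀ x ∈ Set.Ioc (0:ℝ) δ, HasDerivAt h2 (h3 x) x := by
    intro x hx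
    have hf' := (hdiff x hx).2.2.hasDerivAt
    have q : HasDerivAt (fun y : ℝ => 6 * C * y) (6 * C) x := by
      simpa using (hasDerivAt_id x).const_mul (6 * C)
    exact hf'.sub (q.const_add (2 * B))
  -- boundary values
  have hval0 : h 0 = 0 := by simp [hh, hf0]
  have hvalδ : h δ = 0 := by
    simp only [hh, hA, hB, hC]; field_simp; ring
  have h1δ : h1 δ = 0 := by
    simp only [hh1, hA, hB, hC]; field_simp; ring
  have h2δ : h2 δ = 0 := by
    simp only [hh2, hA, hB, hC]; field_simp; ring
  -- continuity
  have hconth : ContinuousOn h (Set.Icc 0 δ) := by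
    apply hcont.sub
    fun_prop
  have hcont1 : ContinuousOn h1 (Set.Ioc 0 δ) :=
    fun x hx => ((Hd1 x hx).differentiableAt).continuousAt.continuousWithinAt
  have hcont2 : ContinuousOn h2 (Set.Ioc 0 δ) :=
    fun x hx => ((Hd2 x hx).differentiableAt).continuousAt.continuousWithinAt
  -- Rolle 1
  obtain ⟨c, hc, hc0⟩ := exists_hasDerivAt_eq_zero hδ hconth (hval0.trans hvalδ.symm)
    (fun x hx => Hd x ⟨hx.1, hx.2.le⟩)
  -- Rolle 2
  obtain ⟨c2, hc2, hc20⟩ := exists_hasDerivAt_eq_zero hc.2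
    (hcont1.mono (fun x hx => ⟨lt_of_lt_of_le hc.1 hx.1, hx.2⟩))
    (hc0.trans h1δ.symm)
    (fun x hx => Hd1 x ⟨hc.1.trans hx.1, hx.2.le⟩)
  -- Rolle 3
  have hc2pos : 0 < c2 := hc.1.trans hc2.1
  obtain ⟨c3, hc3, hc30⟩ := exists_hasDerivAt_eq_zero hc2.2
    (hcont2.mono (fun x hx => ⟨lt_of_lt_of_le hc2pos hx.1, hx.2⟩))
    (hc20.trans h2δ.symm)
    (fun x hx => Hd2 x ⟨hc2pos.trans hx.1, hx.2.le⟩)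
  have hc3pos : 0 < c3 := hc2pos.trans hc3.1
  have hc3mem : c3 ∈ Set.Ioc (0:ℝ) δ := ⟨hc3pos, hc3.2.le⟩
  -- h3 strictly decreasing, hence sign around c3
  have hanti3 : StrictAntiOn h3 (Set.Ioc 0 δ) := by
    intro x hx y hy hxy
    simp only [hh3]
    have := hanti hx hy hxy
    linarith
  have h3pos : ∀ x ∈ Set.Ioc (0:ℝ) δ, x < c3 → 0 < h3 x := by
    intro x hx hlt
    have := hanti3 hx hc3mem hlt
    rwa [hc30] at this
  have h3neg : ∀ x ∈ Set.Ioc (0:ℝ) δ, c3 < x → h3 x < 0 := by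
    intro x hx hlt
    have := hanti3 hc3mem hx hlt
    rwa [hc30] at this
  -- h2 monotone pieces
  have mono2 : StrictMonoOn h2 (Set.Ioc 0 c3) := by
    apply strictMonoOn_of_deriv_pos (convex_Ioc 0 c3)
      (hcont2.mono (fun x hx => ⟨hx.1, hx.2.trans hc3.2.le⟩))
    intro x hx
    rw [interior_Ioc] at hx
    have hxm : x ∈ Set.Ioc (0:ℝ) δ := ⟨hx.1, (hx.2.le.trans hc3.2.le)⟩
    rw [(Hd2 x hxm).deriv]
    exact h3pos x hxm hx.2
  have anti2 : StrictAntiOn h2 (Set.Icc c3 δ) := by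
    apply strictAntiOn_of_deriv_neg (convex_Icc c3 δ)
      (hcont2.mono (fun x hx => ⟨hc3pos.trans_le hx.1, hx.2⟩))
    intro x hx
    rw [interior_Icc] at hx
    have hxm : x ∈ Set.Ioc (0:ℝ) δ := ⟨hc3pos.trans hx.1, hx.2.le⟩
    rw [(Hd2 x hxm).deriv]
    exact h3neg x hxm hx.1
  -- h2 signs
  have h2neg : ∀ x ∈ Set.Ioo (0:ℝ) c2, h2 x < 0 := by
    intro x hx
    have := mono2 ⟨hx.1, hx.2.le.trans hc3.1.le⟩ ⟨hc2pos, hc3.1.le⟩ hx.2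
    rwa [hc20] at this
  have h2pos : ∀ x ∈ Set.Ioo c2 δ, 0 < h2 x := by
    intro x hx
    rcases le_or_gt x c3 with hxc | hxc
    · have := mono2 ⟨hc2pos, hc3.1.le⟩ ⟨hc2pos.trans hx.1, hxc⟩ hx.1
      rwa [hc20] at this
    · have := anti2 ⟨hxc.le, hx.2.le⟩ ⟨hc3.2.le, le_refl δ⟩ hx.2
      rwa [h2δ] at this
  -- h1 monotone pieces
  have anti1 : StrictAntiOn h1 (Set.Ioc 0 c2) := by
    apply strictAntiOn_of_deriv_neg (convex_Ioc 0 c2)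
      (hcont1.mono (fun x hx => ⟨hx.1, hx.2.trans hc2.2.le⟩))
    intro x hx
    rw [interior_Ioc] at hx
    have hxm : x ∈ Set.Ioc (0:ℝ) δ := ⟨hx.1, hx.2.le.trans hc2.2.le⟩
    rw [(Hd1 x hxm).deriv]
    exact h2neg x hx
  have mono1 : StrictMonoOn h1 (Set.Icc c2 δ) := by
    apply strictMonoOn_of_deriv_pos (convex_Icc c2 δ)
      (hcont1.mono (fun x hx => ⟨hc2pos.trans_le hx.1, hx.2⟩))
    intro x hx
    rw [interior_Icc] at hx
    have hxm : x ∈ Set.Ioc (0:ℝ) δ := ⟨hc2pos.trans hx.1, hx.2.le⟩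
    rw [(Hd1 x hxm).deriv]
    exact h2pos x hx
  -- h1 signs
  have h1pos : ∀ x ∈ Set.Ioo (0:ℝ) c, 0 < h1 x := by
    intro x hx
    have := anti1 ⟨hx.1, hx.2.le.trans hc2.1.le⟩ ⟨hc.1, hc2.1.le⟩ hx.2
    rwa [hc0] at this
  have h1neg : ∀ x ∈ Set.Ioo c δ, h1 x < 0 := by
    intro x hx
    rcases le_or_gt x c2 with hxc | hxc
    · have := anti1 ⟨hc.1, hc2.1.le⟩ ⟨hc.1.trans hx.1, hxc⟩ hx.1
      rwa [hc0] at this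
    · have := mono1 ⟨hxc.le, hx.2.le⟩ ⟨hc2.2.le, le_refl δ⟩ hx.2
      rwa [h1δ] at this
  -- h monotone pieces
  have monoh : StrictMonoOn h (Set.Icc 0 c) := by
    apply strictMonoOn_of_deriv_pos (convex_Icc 0 c)
      (hconth.mono (fun x hx => ⟨hx.1, hx.2.trans hc.2.le⟩))
    intro x hx
    rw [interior_Icc] at hx
    have hxm : x ∈ Set.Ioc (0:ℝ) δ := ⟨hx.1, hx.2.le.trans hc.2.le⟩
    rw [(Hd x hxm).deriv]
    exact h1pos x hx
  have antih : StrictAntiOn h (Set.Icc c δ) := by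
    apply strictAntiOn_of_deriv_neg (convex_Icc c δ)
      (hconth.mono (fun x hx => ⟨(hc.1.trans_le hx.1).le, hx.2⟩))
    intro x hx
    rw [interior_Icc] at hx
    have hxm : x ∈ Set.Ioc (0:ℝ) δ := ⟨hc.1.trans hx.1, hx.2.le⟩
    rw [(Hd x hxm).deriv]
    exact h1neg x hx
  -- conclusion
  intro w hw
  have hpos : 0 < h w := by
    rcases le_or_gt w c with hwc | hwc
    · have := monoh ⟨le_refl 0, hc.1.le⟩ ⟨hw.1.le, hwc⟩ hw.1
      rwa [hval0] at this
    · have := antih ⟨hwc.le, hw.2.le⟩ ⟨hc.2.le, le_refl δ⟩ hw.2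
      rwa [hvalδ] at this
  have : h w = f w - g w := by rw [hgw w]
  linarith [this ▸ hpos]
end

section
/- Let f be continuous on [0,δ], with f(0) = 0, thrice differentiable on (0,δ], and f''' strictly increasing on (0,δ]. Then the δ-smoothing g satisfies f(w) < g(w) for all w ∈ (0,δ), provided f ≠ g on (0,δ). -/
/-!
Put `h = f - g`. Then `h 0 = h δ = h' δ = h'' δ = 0` and `h''' = f''' - g'''` is strictly
increasing, `g'''` being constant. Sign information now travels down the derivatives, always to the right:
since `h'''` is increasing and `h'' δ = 0`, once `h''` is negative it stays negative up to `δ`;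
hence once `h'` is positive it stays positive up to `δ` (it either increases, or decreases to
`h' δ = 0`). So `h` first decreases from `h 0 = 0` and then increases to `h δ = 0`, which puts it
below zero in between; it cannot vanish on an interval `(0, w)`, since then `h'''` would vanish
there too.
-/

open Set

section SignPersistence

/- For a predicate `P`, `MonotoneOn (fun x => P x) s` says that once `P` holds at a point of `s`,
it holds at every point of `s` to the right of it. -/

variable {φ φ' : ℝ → ℝ} {a b : ℝ}

theorem continuousOn_Icc_of_hasDerivAt (hd : ∀ x ∈ Ioc a b, HasDerivAt φ (φ' x) x)
    {x y : ℝ} (hx : a < x) (hy : y ≤ b) : ContinuousOn φ (Icc x y) :=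
  fun t ht => (hd t ⟨hx.trans_le ht.1, ht.2.trans hy⟩).continuousAt.continuousWithinAt

theorem hasDerivWithinAt_interior_Icc_of_hasDerivAt (hd : ∀ x ∈ Ioc a b, HasDerivAt φ (φ' x) x)
    {x y : ℝ} (hx : a ≤ x) (hy : y ≤ b) :
    ∀ t ∈ interior (Icc x y), HasDerivWithinAt φ (φ' t) (interior (Icc x y)) t := by
  rw [interior_Icc]
  exact fun t ht => (hd t ⟨hx.trans_lt ht.1, ht.2.le.trans hy⟩).hasDerivWithinAt

theorem monotoneOn_pos_of_monotoneOn_deriv_neg (hd : ∀ x ∈ Ioc a b, HasDerivAt φ (φ' x) x)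
    (hb : φ b = 0) (h' : MonotoneOn (fun x => φ' x < 0) (Ioo a b)) :
    MonotoneOn (fun x => 0 < φ x) (Ioo a b) := by
  intro x hx y hy hxy (hpos : 0 < φ x)
  show 0 < φ y
  by_cases hneg : φ' y < 0
  · have hanti : StrictAntiOn φ (Icc y b) :=
      strictAntiOn_of_hasDerivWithinAt_neg (convex_Icc y b)
        (continuousOn_Icc_of_hasDerivAt hd hy.1 le_rfl)
        (hasDerivWithinAt_interior_Icc_of_hasDerivAt hd hy.1.le le_rfl)
        (by rw [interior_Icc]; exact fun t ht => h' hy ⟨hy.1.trans ht.1, ht.2⟩ ht.1.le hneg)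
    simpa [hb] using hanti (left_mem_Icc.2 hy.2.le) (right_mem_Icc.2 hy.2.le) hy.2
  · have hmono : MonotoneOn φ (Icc x y) :=
      monotoneOn_of_hasDerivWithinAt_nonneg (convex_Icc x y)
        (continuousOn_Icc_of_hasDerivAt hd hx.1 hy.2.le)
        (hasDerivWithinAt_interior_Icc_of_hasDerivAt hd hx.1.le hy.2.le)
        (by
          rw [interior_Icc]
          exact fun t ht => not_lt.1 fun ht' =>
            hneg (h' ⟨hx.1.trans ht.1, ht.2.trans hy.2⟩ hy ht.2.le ht'))
    exact hpos.trans_le (hmono (left_mem_Icc.2 hxy) (right_mem_Icc.2 hxy) hxy)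

theorem eqOn_zero_of_hasDerivAt_of_eqOn_zero {s : Set ℝ} (hs : IsOpen s)
    (hd : ∀ x ∈ s, HasDerivAt φ (φ' x) x) (h0 : EqOn φ 0 s) : EqOn φ' 0 s := fun x hx => by
  rw [← (hd x hx).deriv, h0.deriv hs hx]
  simp

theorem neg_of_monotoneOn_deriv_pos (hc : ContinuousOn φ (Icc a b))
    (hd : ∀ x ∈ Ioc a b, HasDerivAt φ (φ' x) x) (ha : φ a = 0) (hb : φ b = 0)
    (h' : MonotoneOn (fun x => 0 < φ' x) (Ioo a b))
    (hnondeg : ∀ w ∈ Ioo a b, ¬EqOn φ' 0 (Ioo a w)) {w : ℝ} (hw : w ∈ Ioo a b) : φ w < 0 := by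
  by_cases hpos : 0 < φ' w
  · have hmono : StrictMonoOn φ (Icc w b) :=
      strictMonoOn_of_hasDerivWithinAt_pos (convex_Icc w b)
        (continuousOn_Icc_of_hasDerivAt hd hw.1 le_rfl)
        (hasDerivWithinAt_interior_Icc_of_hasDerivAt hd hw.1.le le_rfl)
        (by rw [interior_Icc]; exact fun t ht => h' hw ⟨hw.1.trans ht.1, ht.2⟩ ht.1.le hpos)
    simpa [hb] using hmono (left_mem_Icc.2 hw.2.le) (right_mem_Icc.2 hw.2.le) hw.2
  have hanti : AntitoneOn φ (Icc a w) :=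
    antitoneOn_of_hasDerivWithinAt_nonpos (convex_Icc a w) (hc.mono (Icc_subset_Icc le_rfl hw.2.le))
      (hasDerivWithinAt_interior_Icc_of_hasDerivAt hd le_rfl hw.2.le)
      (by
        rw [interior_Icc]
        exact fun t ht => not_lt.1 fun ht' => hpos (h' ⟨ht.1, ht.2.trans hw.2⟩ hw ht.2.le ht'))
  have hle : φ w ≤ 0 := ha ▸ hanti (left_mem_Icc.2 hw.1.le) (right_mem_Icc.2 hw.1.le) hw.1.le
  refine hle.lt_of_ne fun hzero => hnondeg w hw ?_
  have hφ_zero : EqOn φ 0 (Ioo a w) := fun t ht => by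
    have hwt := hanti ⟨ht.1.le, ht.2.le⟩ (right_mem_Icc.2 hw.1.le) ht.2.le
    have hta := hanti (left_mem_Icc.2 hw.1.le) ⟨ht.1.le, ht.2.le⟩ ht.1.le
    simp only [Pi.zero_apply]
    linarith
  exact eqOn_zero_of_hasDerivAt_of_eqOn_zero isOpen_Ioo
    (fun t ht => hd t ⟨ht.1, ht.2.le.trans hw.2.le⟩) hφ_zero

end SignPersistence

theorem neg_of_strictMonoOn_third_deriv {h h₁ h₂ h₃ : ℝ → ℝ} {a b : ℝ}
    (hc : ContinuousOn h (Icc a b))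
    (hd₁ : ∀ x ∈ Ioc a b, HasDerivAt h (h₁ x) x)
    (hd₂ : ∀ x ∈ Ioc a b, HasDerivAt h₁ (h₂ x) x)
    (hd₃ : ∀ x ∈ Ioc a b, HasDerivAt h₂ (h₃ x) x)
    (ha : h a = 0) (hb : h b = 0) (hb₁ : h₁ b = 0) (hb₂ : h₂ b = 0)
    (h₃_mono : StrictMonoOn h₃ (Ioc a b)) : ∀ w ∈ Ioo a b, h w < 0 := by
  have h₂_neg : MonotoneOn (fun x => h₂ x < 0) (Ioo a b) := by
    have := monotoneOn_pos_of_monotoneOn_deriv_neg (φ := fun x => -h₂ x)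
      (fun x hx => (hd₃ x hx).neg) (by simp [hb₂])
      (fun x hx y hy hxy (hx' : -h₃ x < 0) => show -h₃ y < 0 from
        neg_lt_zero.2 ((neg_lt_zero.1 hx').trans_le
          (h₃_mono.monotoneOn ⟨hx.1, hx.2.le⟩ ⟨hy.1, hy.2.le⟩ hxy)))
    simpa only [neg_pos] using this
  have h₁_pos := monotoneOn_pos_of_monotoneOn_deriv_neg hd₂ hb₁ h₂_neg
  refine fun w hw => neg_of_monotoneOn_deriv_pos hc hd₁ ha hb h₁_pos (fun w hw h₁_zero => ?_) hw
  have hsub : Ioo a w ⊆ Ioc a b := fun t ht => ⟨ht.1, ht.2.le.trans hw.2.le⟩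
  have h₃_zero : EqOn h₃ 0 (Ioo a w) :=
    eqOn_zero_of_hasDerivAt_of_eqOn_zero isOpen_Ioo (fun t ht => hd₃ t (hsub ht))
      (eqOn_zero_of_hasDerivAt_of_eqOn_zero isOpen_Ioo (fun t ht => hd₂ t (hsub ht)) h₁_zero)
  obtain ⟨u, hau, huw⟩ := exists_between hw.1
  obtain ⟨v, huv, hvw⟩ := exists_between huw
  exact huv.ne (h₃_mono.injOn (hsub ⟨hau, huw⟩) (hsub ⟨hau.trans huv, hvw⟩)
    ((h₃_zero ⟨hau, huw⟩).trans (h₃_zero ⟨hau.trans huv, hvw⟩).symm))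

theorem hasDerivAt_cubic (p q r x : ℝ) :
    HasDerivAt (fun w => p * w + q * w ^ 2 + r * w ^ 3) (p + 2 * q * x + 3 * r * x ^ 2) x :=
  ((((hasDerivAt_id' x).const_mul p).fun_add ((hasDerivAt_pow 2 x).const_mul q)).fun_add
    ((hasDerivAt_pow 3 x).const_mul r)).congr_deriv (by norm_num; ring)

theorem hasDerivAt_quadratic (p q r x : ℝ) :
    HasDerivAt (fun w => p + q * w + r * w ^ 2) (q + 2 * r * x) x :=
  ((((hasDerivAt_id' x).const_mul q).const_add p).fun_add
    ((hasDerivAt_pow 2 x).const_mul r)).congr_deriv (by norm_num; ring)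

theorem stmt_13_general (f : ℝ → ℝ) (δ : ℝ) (hδ : 0 < δ) (hf0 : f 0 = 0)
    (hcont : ContinuousOn f (Set.Icc 0 δ))
    (hdiff : ∀ w ∈ Set.Ioc (0:ℝ) δ, DifferentiableAt ℝ f w ∧
      DifferentiableAt ℝ (deriv f) w ∧ DifferentiableAt ℝ (deriv (deriv f)) w)
    (hanti : StrictMonoOn (deriv (deriv (deriv f))) (Set.Ioc 0 δ))
    (g : ℝ → ℝ)
    (hg : g = fun w =>
      (3 * f δ / δ - 2 * deriv f δ + δ * deriv (deriv f) δ / 2) * w +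
      (-6 * f δ / δ ^ 2 + 6 * deriv f δ / δ - 2 * deriv (deriv f) δ) / 2 * w ^ 2 +
      (6 * f δ / δ ^ 3 - 6 * deriv f δ / δ ^ 2 + 3 * deriv (deriv f) δ / δ) / 6 * w ^ 3) :
    ∀ w ∈ Set.Ioo (0:ℝ) δ, f w < g w := by
  set A := 3 * f δ / δ - 2 * deriv f δ + δ * deriv (deriv f) δ / 2
  set B := (-6 * f δ / δ ^ 2 + 6 * deriv f δ / δ - 2 * deriv (deriv f) δ) / 2
  set C := (6 * f δ / δ ^ 3 - 6 * deriv f δ / δ ^ 2 + 3 * deriv (deriv f) δ / δ) / 6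
  subst hg
  have h_neg := neg_of_strictMonoOn_third_deriv
    (h := fun w => f w - (A * w + B * w ^ 2 + C * w ^ 3))
    (h₁ := fun w => deriv f w - (A + 2 * B * w + 3 * C * w ^ 2))
    (h₂ := fun w => deriv (deriv f) w - (2 * B + 6 * C * w))
    (h₃ := fun w => deriv (deriv (deriv f)) w - 6 * C)
    (hcont.sub (by fun_prop))
    (fun x hx => (hdiff x hx).1.hasDerivAt.sub (hasDerivAt_cubic A B C x))
    (fun x hx => (hdiff x hx).2.1.hasDerivAt.sub
      ((hasDerivAt_quadratic A (2 * B) (3 * C) x).congr_deriv (by ring)))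
    (fun x hx => (hdiff x hx).2.2.hasDerivAt.sub
      ((((hasDerivAt_id' x).const_mul (6 * C)).const_add (2 * B)).congr_deriv (mul_one _)))
    (by simp [hf0])
    (by simp only [A, B, C]; field_simp; ring) (by simp only [A, B, C]; field_simp; ring)
    (by simp only [B, C]; field_simp; ring)
    (fun u hu v hv huv => sub_lt_sub_right (hanti hu hv huv) _)
  exact fun w hw => sub_neg.1 (h_neg w hw)

theorem stmt_13 (f : ℝ → ℝ) (δ : ℝ) (hδ : 0 < δ) (hf0 : f 0 = 0)
    (hcont : ContinuousOn f (Set.Icc 0 δ))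
    (hdiff : ∀ w ∈ Set.Ioc (0:ℝ) δ, DifferentiableAt ℝ f w ∧
      DifferentiableAt ℝ (deriv f) w ∧ DifferentiableAt ℝ (deriv (deriv f)) w)
    (hanti : StrictMonoOn (deriv (deriv (deriv f))) (Set.Ioc 0 δ))
    (g : ℝ → ℝ)
    (hg : g = fun w =>
      (3 * f δ / δ - 2 * deriv f δ + δ * deriv (deriv f) δ / 2) * w +
      (-6 * f δ / δ ^ 2 + 6 * deriv f δ / δ - 2 * deriv (deriv f) δ) / 2 * w ^ 2 +
      (6 * f δ / δ ^ 3 - 6 * deriv f δ / δ ^ 2 + 3 * deriv (deriv f) δ / δ) / 6 * w ^ 3)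
    (hne : ∃ w ∈ Set.Ioo (0:ℝ) δ, f w ≠ g w) :
    ∀ w ∈ Set.Ioo (0:ℝ) δ, f w < g w :=
  stmt_13_general f δ hδ hf0 hcont hdiff hanti g hg
end

section
/- For f(w) = w^p with 0 < p < 1 and any δ > 0, the δ-smoothing g of f satisfies g(w) ≤ f(w) for all w ≥ 0. -/
/-!
On `[0, δ]` the smoothing is `g w = δ ^ p * t * T t` with `t = w / δ`, where
`T t = 1 + (p - 1) (t - 1) + (p - 1) (p - 2) / 2 * (t - 1) ^ 2` is the second-order Taylor
polynomial of `t ^ (p - 1)` at `t = 1`; since `w ^ p = δ ^ p * t * t ^ (p - 1)`, it suffices that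
`T t ≤ t ^ (p - 1)` on `(0, 1]`. The difference `t ^ (p - 1) - T t` vanishes to second order at
`t = 1`, and its second derivative `(p - 1) (p - 2) (t ^ (p - 3) - 1)` is nonnegative on `(0, 1]`,
so its derivative is nonpositive there and the difference itself is nonnegative.
-/

open Real Set

theorem deriv_deriv_rpow_const (p x : ℝ) :
    deriv (deriv fun w : ℝ => w ^ p) x = p * (p - 1) * x ^ (p - 2) := by
  have := Real.iter_deriv_rpow_const p x 2
  simp only [Function.iterate_succ, Function.iterate_zero, Function.comp_apply, id] at this
  rw [this, descPochhammer_succ_right, descPochhammer_one]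
  simp

theorem quadratic_taylor_le_rpow_of_nonpos {s t : ℝ} (hs : s ≤ 0) (ht0 : 0 < t) (ht1 : t ≤ 1) :
    1 + s * (t - 1) + s * (s - 1) / 2 * (t - 1) ^ 2 ≤ t ^ s := by
  set h : ℝ → ℝ := fun y => y ^ s - (1 + s * (y - 1) + s * (s - 1) / 2 * (y - 1) ^ 2)
  set h' : ℝ → ℝ := fun y => s * y ^ (s - 1) - s - s * (s - 1) * (y - 1)
  have hasDerivAt_h : ∀ y, 0 < y → HasDerivAt h (h' y) y := fun y hy => by
    have := (hasDerivAt_rpow_const (p := s) (Or.inl hy.ne')).sub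
      (((hasDerivAt_id y).sub_const 1).const_mul s |>.const_add 1 |>.add
        ((((hasDerivAt_id y).sub_const 1).pow 2).const_mul (s * (s - 1) / 2)))
    refine this.congr_deriv ?_
    simp only [h', id]
    ring
  have hasDerivAt_h' : ∀ y, 0 < y → HasDerivAt h' (s * (s - 1) * (y ^ (s - 2) - 1)) y :=
    fun y hy => by
    have := (((hasDerivAt_rpow_const (p := s - 1) (Or.inl hy.ne')).const_mul s).sub_const s).sub
      (((hasDerivAt_id y).sub_const 1).const_mul (s * (s - 1)))
    refine this.congr_deriv ?_
    rw [show s - 1 - 1 = s - 2 by ring]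
    ring
  have h'_mono : MonotoneOn h' (Ioc 0 1) := by
    refine monotoneOn_of_hasDerivWithinAt_nonneg (f' := fun y => s * (s - 1) * (y ^ (s - 2) - 1))
      (convex_Ioc 0 1)
      (fun y hy => (hasDerivAt_h' y hy.1).continuousAt.continuousWithinAt) ?_ ?_
    · rw [interior_Ioc]
      exact fun y hy => (hasDerivAt_h' y hy.1).hasDerivWithinAt
    · rw [interior_Ioc]
      intro y hy
      have hpow : 1 ≤ y ^ (s - 2) :=
        one_le_rpow_of_pos_of_le_one_of_nonpos hy.1 hy.2.le (by linarith)
      have hcoef : 0 ≤ s * (s - 1) := mul_nonneg_of_nonpos_of_nonpos hs (by linarith)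
      positivity
  have h'_one : h' 1 = 0 := by simp [h']
  have h_anti : AntitoneOn h (Ioc 0 1) := by
    refine antitoneOn_of_hasDerivWithinAt_nonpos (f' := h') (convex_Ioc 0 1)
      (fun y hy => (hasDerivAt_h y hy.1).continuousAt.continuousWithinAt) ?_ ?_
    · rw [interior_Ioc]
      exact fun y hy => (hasDerivAt_h y hy.1).hasDerivWithinAt
    · rw [interior_Ioc]
      intro y hy
      rw [← h'_one]
      exact h'_mono (Ioo_subset_Ioc_self hy) ⟨zero_lt_one, le_rfl⟩ hy.2.le
  have h_one : h 1 = 0 := by simp [h]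
  have := h_anti ⟨ht0, ht1⟩ ⟨zero_lt_one, le_rfl⟩ ht1
  simpa only [h_one, h, sub_nonneg] using this

theorem mul_quadratic_taylor_le_rpow {p t : ℝ} (hp : p ≤ 1) (ht0 : 0 ≤ t) (ht1 : t ≤ 1) :
    t * (1 + (p - 1) * (t - 1) + (p - 1) * (p - 2) / 2 * (t - 1) ^ 2) ≤ t ^ p := by
  rcases ht0.eq_or_lt with rfl | ht0
  · simpa using rpow_nonneg le_rfl p
  have key := quadratic_taylor_le_rpow_of_nonpos (by linarith) ht0 ht1 (s := p - 1)
  calc t * (1 + (p - 1) * (t - 1) + (p - 1) * (p - 2) / 2 * (t - 1) ^ 2)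
      ≤ t * t ^ (p - 1) := by
        rw [show p - 2 = p - 1 - 1 by ring]
        exact mul_le_mul_of_nonneg_left key ht0.le
    _ = t ^ p := by rw [rpow_sub_one ht0.ne']; field_simp

/-- The cubic part of the `δ`-smoothing of `f`, with `a = f δ`, `b = f' δ`, `c = f'' δ`. -/
noncomputable def smoothingCubic (a b c δ w : ℝ) : ℝ :=
  (3 * a / δ - 2 * b + δ * c / 2) * w +
    (-6 * a / δ ^ 2 + 6 * b / δ - 2 * c) / 2 * w ^ 2 +
    (6 * a / δ ^ 3 - 6 * b / δ ^ 2 + 3 * c / δ) / 6 * w ^ 3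

theorem smoothingCubic_rpow_le {p δ w : ℝ} (hp : p ≤ 1) (hδ : 0 < δ) (hw0 : 0 ≤ w)
    (hwδ : w ≤ δ) :
    smoothingCubic (δ ^ p) (p * δ ^ (p - 1)) (p * (p - 1) * δ ^ (p - 2)) δ w ≤ w ^ p := by
  set t := w / δ with ht
  have hw : w = δ * t := by rw [ht]; field_simp
  have hδ2 : δ ^ (p - 2) = δ ^ p / δ ^ 2 := by exact_mod_cast rpow_sub_natCast hδ.ne' p 2
  calc smoothingCubic (δ ^ p) (p * δ ^ (p - 1)) (p * (p - 1) * δ ^ (p - 2)) δ w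
      = δ ^ p * (t * (1 + (p - 1) * (t - 1) + (p - 1) * (p - 2) / 2 * (t - 1) ^ 2)) := by
        rw [smoothingCubic, rpow_sub_one hδ.ne', hδ2, hw]
        field_simp
        ring
    _ ≤ δ ^ p * t ^ p := by
        gcongr
        exact mul_quadratic_taylor_le_rpow hp (by positivity) ((div_le_one hδ).2 hwδ)
    _ = w ^ p := by rw [hw, mul_rpow hδ.le (by positivity)]

theorem stmt_14_general (p δ : ℝ) (hp1 : p < 1) (hδ : 0 < δ)
    (f : ℝ → ℝ) (hf : f = fun w => w ^ p)
    (g : ℝ → ℝ)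
    (hg : g = fun w =>
      if w ≤ δ then
        (3 * f δ / δ - 2 * deriv f δ + δ * deriv (deriv f) δ / 2) * w +
        (-6 * f δ / δ ^ 2 + 6 * deriv f δ / δ - 2 * deriv (deriv f) δ) / 2 * w ^ 2 +
        (6 * f δ / δ ^ 3 - 6 * deriv f δ / δ ^ 2 + 3 * deriv (deriv f) δ / δ) / 6 * w ^ 3
      else f w) :
    ∀ w : ℝ, 0 ≤ w → g w ≤ f w := by
  subst hf hg
  intro w hw
  by_cases hwδ : w ≤ δ
  · simp only [if_pos hwδ, Real.deriv_rpow_const, deriv_deriv_rpow_const]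
    exact smoothingCubic_rpow_le hp1.le hδ hw hwδ
  · simp only [if_neg hwδ, le_refl]

theorem stmt_14 (p δ : ℝ) (hp0 : 0 < p) (hp1 : p < 1) (hδ : 0 < δ)
    (f : ℝ → ℝ) (hf : f = fun w => w ^ p)
    (g : ℝ → ℝ)
    (hg : g = fun w =>
      if w ≤ δ then
        (3 * f δ / δ - 2 * deriv f δ + δ * deriv (deriv f) δ / 2) * w +
        (-6 * f δ / δ ^ 2 + 6 * deriv f δ / δ - 2 * deriv (deriv f) δ) / 2 * w ^ 2 +
        (6 * f δ / δ ^ 3 - 6 * deriv f δ / δ ^ 2 + 3 * deriv (deriv f) δ / δ) / 6 * w ^ 3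
      else f w) :
    ∀ w : ℝ, 0 ≤ w → g w ≤ f w :=
  stmt_14_general p δ hp1 hδ f hf g hg
end

section
/- Let f be continuous on [0,U), thrice differentiable on (0,U), with f(0) = 0 and f''' strictly decreasing on (0,U). Then δ ↦ ‖f − g_δ‖_∞ := max_{w∈[0,δ]} |f(w) − g_δ(w)| is strictly increasing on (0,U), where g_δ is the δ-smoothing of f. -/
/-!
Differentiating the Hermite cubic `g_δ` in `δ` gives
`∂_δ g_δ(w) = (f'''(δ) - g_δ''') / (2δ) · w (w - δ)²`.
Since `f - g_δ` vanishes at `0` and to second order at `δ`, three applications of Rolle's theorem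
give `g_δ''' = f'''(ξ)` for some `ξ ∈ (0, δ)`, so `g_δ''' > f'''(δ)` and `g_δ(w)` strictly
decreases in `δ` for each fixed `w > 0`. As `g_w(w) = f(w)`, the error `f - g_δ` is nonnegative on
`[0, δ]` and strictly increases pointwise with `δ`; hence so does its maximum.
-/

open Set

theorem exists_eq_of_hasDerivAt_of_eq_endpoints {φ φ' p p' : ℝ → ℝ} {a b : ℝ} (hab : a < b)
    (hφ : ContinuousOn φ (Icc a b)) (hφ' : ∀ x ∈ Ioo a b, HasDerivAt φ (φ' x) x)
    (hp : ∀ x, HasDerivAt p (p' x) x) (ha : φ a = p a) (hb : φ b = p b) :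
    ∃ c ∈ Ioo a b, φ' c = p' c := by
  obtain ⟨c, hc, h⟩ := exists_hasDerivAt_eq_zero hab
    (hφ.sub fun x _ => (hp x).continuousAt.continuousWithinAt)
    (by simp only [Pi.sub_apply, ha, hb, sub_self])
    fun x hx => (hφ' x hx).sub (hp x)
  exact ⟨c, hc, sub_eq_zero.1 h⟩

noncomputable section

namespace Smoothing

variable (f : ℝ → ℝ)

def linCoeff (δ : ℝ) : ℝ := 3 * f δ / δ - 2 * deriv f δ + δ * deriv (deriv f) δ / 2

def quadCoeff (δ : ℝ) : ℝ := (-6 * f δ / δ ^ 2 + 6 * deriv f δ / δ - 2 * deriv (deriv f) δ) / 2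

def cubCoeff (δ : ℝ) : ℝ :=
  (6 * f δ / δ ^ 3 - 6 * deriv f δ / δ ^ 2 + 3 * deriv (deriv f) δ / δ) / 6

/-- The `δ`-smoothing `g_δ`: the cubic with `g_δ(0) = 0` matching `f, f', f''` at `δ`. -/
def cubic (δ w : ℝ) : ℝ := linCoeff f δ * w + quadCoeff f δ * w ^ 2 + cubCoeff f δ * w ^ 3

def error (δ w : ℝ) : ℝ := f w - cubic f δ w

lemma hasDerivAt_cubic (δ w : ℝ) :
    HasDerivAt (cubic f δ)
      (linCoeff f δ + 2 * quadCoeff f δ * w + 3 * cubCoeff f δ * w ^ 2) w := by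
  refine ((((hasDerivAt_id w).const_mul (linCoeff f δ)).add
    ((hasDerivAt_pow 2 w).const_mul (quadCoeff f δ))).add
    ((hasDerivAt_pow 3 w).const_mul (cubCoeff f δ))).congr_deriv ?_
  push_cast; ring

lemma hasDerivAt_deriv_cubic (δ w : ℝ) :
    HasDerivAt (fun w => linCoeff f δ + 2 * quadCoeff f δ * w + 3 * cubCoeff f δ * w ^ 2)
      (2 * quadCoeff f δ + 6 * cubCoeff f δ * w) w := by
  refine ((((hasDerivAt_id w).const_mul (2 * quadCoeff f δ)).const_add (linCoeff f δ)).add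
    ((hasDerivAt_pow 2 w).const_mul (3 * cubCoeff f δ))).congr_deriv ?_
  push_cast; ring

lemma hasDerivAt_deriv_deriv_cubic (δ w : ℝ) :
    HasDerivAt (fun w => 2 * quadCoeff f δ + 6 * cubCoeff f δ * w) (6 * cubCoeff f δ) w := by
  simpa using ((hasDerivAt_id w).const_mul (6 * cubCoeff f δ)).const_add (2 * quadCoeff f δ)

lemma cubic_zero (δ : ℝ) : cubic f δ 0 = 0 := by
  simp [cubic]

variable {f} {δ : ℝ}

lemma cubic_self (hδ : δ ≠ 0) : cubic f δ δ = f δ := by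
  simp only [cubic, linCoeff, quadCoeff, cubCoeff]; field_simp; ring

lemma deriv_cubic_self (hδ : δ ≠ 0) :
    linCoeff f δ + 2 * quadCoeff f δ * δ + 3 * cubCoeff f δ * δ ^ 2 = deriv f δ := by
  simp only [linCoeff, quadCoeff, cubCoeff]; field_simp; ring

lemma deriv_deriv_cubic_self (hδ : δ ≠ 0) :
    2 * quadCoeff f δ + 6 * cubCoeff f δ * δ = deriv (deriv f) δ := by
  simp only [quadCoeff, cubCoeff]; field_simp; ring

lemma exists_deriv3_eq_cubCoeff (hδ : 0 < δ) (hf0 : f 0 = 0) (hcont : ContinuousOn f (Icc 0 δ))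
    (hdiff : ∀ x ∈ Ioc 0 δ, DifferentiableAt ℝ f x ∧ DifferentiableAt ℝ (deriv f) x ∧
      DifferentiableAt ℝ (deriv (deriv f)) x) :
    ∃ ξ ∈ Ioo 0 δ, deriv (deriv (deriv f)) ξ = 6 * cubCoeff f δ := by
  have mem : ∀ {ξ x : ℝ}, 0 < ξ → x ∈ Icc ξ δ → x ∈ Ioc 0 δ :=
    fun hξ hx => ⟨hξ.trans_le hx.1, hx.2⟩
  obtain ⟨ξ₁, hξ₁, h₁⟩ := exists_eq_of_hasDerivAt_of_eq_endpoints hδ hcont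
    (fun x hx => (hdiff x (Ioo_subset_Ioc_self hx)).1.hasDerivAt) (hasDerivAt_cubic f δ)
    (by rw [hf0, cubic_zero]) (cubic_self hδ.ne').symm
  obtain ⟨ξ₂, hξ₂, h₂⟩ := exists_eq_of_hasDerivAt_of_eq_endpoints hξ₁.2
    (fun x hx => (hdiff x (mem hξ₁.1 hx)).2.1.continuousAt.continuousWithinAt)
    (fun x hx => (hdiff x (mem hξ₁.1 (Ioo_subset_Icc_self hx))).2.1.hasDerivAt)
    (hasDerivAt_deriv_cubic f δ) h₁ (deriv_cubic_self hδ.ne').symm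
  have hξ₂0 : 0 < ξ₂ := hξ₁.1.trans hξ₂.1
  obtain ⟨ξ₃, hξ₃, h₃⟩ := exists_eq_of_hasDerivAt_of_eq_endpoints hξ₂.2
    (fun x hx => (hdiff x (mem hξ₂0 hx)).2.2.continuousAt.continuousWithinAt)
    (fun x hx => (hdiff x (mem hξ₂0 (Ioo_subset_Icc_self hx))).2.2.hasDerivAt)
    (hasDerivAt_deriv_deriv_cubic f δ) h₂ (deriv_deriv_cubic_self hδ.ne').symm
  exact ⟨ξ₃, ⟨hξ₂0.trans hξ₃.1, hξ₃.2⟩, h₃⟩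

lemma hasDerivAt_cubic_left (w : ℝ) (hδ : δ ≠ 0) (h₁ : DifferentiableAt ℝ f δ)
    (h₂ : DifferentiableAt ℝ (deriv f) δ) (h₃ : DifferentiableAt ℝ (deriv (deriv f)) δ) :
    HasDerivAt (fun t => cubic f t w)
      ((deriv (deriv (deriv f)) δ - 6 * cubCoeff f δ) / (2 * δ) * (w * (w - δ) ^ 2)) δ := by
  have hf := h₁.hasDerivAt
  have hf' := h₂.hasDerivAt
  have hf'' := h₃.hasDerivAt
  have hid := hasDerivAt_id' δ
  have hlin := (((hf.const_mul 3).div hid hδ).sub (hf'.const_mul 2)).add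
    ((hid.mul hf'').div_const 2)
  have hquad := ((((hf.const_mul (-6)).div (hasDerivAt_pow 2 δ) (pow_ne_zero 2 hδ)).add
    ((hf'.const_mul 6).div hid hδ)).sub (hf''.const_mul 2)).div_const 2
  have hcub := ((((hf.const_mul 6).div (hasDerivAt_pow 3 δ) (pow_ne_zero 3 hδ)).sub
    ((hf'.const_mul 6).div (hasDerivAt_pow 2 δ) (pow_ne_zero 2 hδ))).add
    ((hf''.const_mul 3).div hid hδ)).div_const 6
  refine (((hlin.mul_const w).add (hquad.mul_const (w ^ 2))).add
    (hcub.mul_const (w ^ 3))).congr_deriv ?_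
  simp only [cubCoeff]
  push_cast
  field_simp
  ring

lemma error_self (hδ : δ ≠ 0) : error f δ δ = 0 := by
  rw [error, cubic_self hδ, sub_self]

lemma error_zero_right (hf0 : f 0 = 0) : error f δ 0 = 0 := by
  rw [error, hf0, cubic_zero, sub_self]

structure Admissible (f : ℝ → ℝ) (T : ℝ) : Prop where
  zero : f 0 = 0
  continuousOn : ContinuousOn f (Icc 0 T)
  differentiableAt : ∀ x ∈ Ioc 0 T, DifferentiableAt ℝ f x ∧ DifferentiableAt ℝ (deriv f) x ∧
    DifferentiableAt ℝ (deriv (deriv f)) x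
  strictAntiOn : StrictAntiOn (deriv (deriv (deriv f))) (Ioc 0 T)

namespace Admissible

variable {T s t w : ℝ}

lemma mono (h : Admissible f T) (hST : s ≤ T) : Admissible f s where
  zero := h.zero
  continuousOn := h.continuousOn.mono (Icc_subset_Icc_right hST)
  differentiableAt x hx := h.differentiableAt x (Ioc_subset_Ioc_right hST hx)
  strictAntiOn := h.strictAntiOn.mono (Ioc_subset_Ioc_right hST)

lemma deriv3_lt_cubCoeff (h : Admissible f δ) (hδ : 0 < δ) :
    deriv (deriv (deriv f)) δ < 6 * cubCoeff f δ := by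
  obtain ⟨ξ, hξ, hξeq⟩ := exists_deriv3_eq_cubCoeff hδ h.zero h.continuousOn h.differentiableAt
  exact hξeq ▸ h.strictAntiOn (Ioo_subset_Ioc_self hξ) ⟨hδ, le_rfl⟩ hξ.2

lemma cubic_strictAntiOn (h : Admissible f T) (hw : 0 < w) :
    StrictAntiOn (fun δ => cubic f δ w) (Icc w T) := by
  have hderiv : ∀ x ∈ Icc w T, HasDerivAt (fun δ => cubic f δ w)
      ((deriv (deriv (deriv f)) x - 6 * cubCoeff f x) / (2 * x) * (w * (w - x) ^ 2)) x := by
    intro x hx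
    obtain ⟨h₁, h₂, h₃⟩ := h.differentiableAt x ⟨hw.trans_le hx.1, hx.2⟩
    exact hasDerivAt_cubic_left w (hw.trans_le hx.1).ne' h₁ h₂ h₃
  refine strictAntiOn_of_hasDerivWithinAt_neg (convex_Icc w T)
    (fun x hx => (hderiv x hx).continuousAt.continuousWithinAt)
    (fun x hx => (hderiv x (interior_subset hx)).hasDerivWithinAt) fun x hx => ?_
  rw [interior_Icc] at hx
  have hx0 : 0 < x := hw.trans hx.1
  have hcoeff := (h.mono hx.2.le).deriv3_lt_cubCoeff hx0
  exact mul_neg_of_neg_of_pos (div_neg_of_neg_of_pos (by linarith) (by linarith))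
    (mul_pos hw (even_two.pow_pos (sub_ne_zero.2 hx.1.ne)))

lemma error_lt_error (h : Admissible f T) (hw : 0 < w) (hws : w ≤ s) (hst : s < t)
    (ht : t ≤ T) :
    error f s w < error f t w := by
  have := h.cubic_strictAntiOn hw ⟨hws, hst.le.trans ht⟩ ⟨hws.trans hst.le, ht⟩ hst
  simp only [error]
  linarith

lemma error_nonneg (h : Admissible f T) (hw : 0 ≤ w) (hwδ : w ≤ δ) (hδ : δ ≤ T) :
    0 ≤ error f δ w := by
  rcases hw.eq_or_lt with rfl | hw
  · exact (error_zero_right h.zero).ge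
  rcases hwδ.eq_or_lt with rfl | hwδ
  · exact (error_self hw.ne').ge
  exact error_self (f := f) hw.ne' ▸ (h.error_lt_error hw le_rfl hwδ hδ).le

lemma exists_abs_error_lt (h : Admissible f T) (hs : 0 < s) (hst : s < t) (ht : t ≤ T) :
    ∀ w ∈ Icc 0 s, ∃ v ∈ Icc 0 t, |error f s w| < |error f t v| := by
  intro w hw
  rcases hw.1.eq_or_lt with rfl | hw0
  · refine ⟨s, ⟨hs.le, hst.le⟩, ?_⟩
    rw [error_zero_right h.zero, abs_zero]
    exact (error_self hs.ne' ▸ h.error_lt_error hs le_rfl hst ht).trans_le (le_abs_self _)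
  · refine ⟨w, ⟨hw.1, hw.2.trans hst.le⟩, ?_⟩
    rw [abs_of_nonneg (h.error_nonneg hw.1 hw.2 (hst.le.trans ht))]
    exact (h.error_lt_error hw0 hw.2 hst ht).trans_le (le_abs_self _)

lemma continuousOn_abs_error (h : Admissible f T) (hδ : δ ≤ T) :
    ContinuousOn (fun w => |error f δ w|) (Icc 0 δ) :=
  ((h.mono hδ).continuousOn.sub
    fun w _ => (hasDerivAt_cubic f δ w).continuousAt.continuousWithinAt).abs

end Admissible

end Smoothing

end

theorem stmt_16_general (f : ℝ → ℝ) (U : EReal) (hf0 : f 0 = 0)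
    (hcont : ContinuousOn f {w : ℝ | 0 ≤ w ∧ (w : EReal) < U})
    (hdiff : ∀ w : ℝ, 0 < w → (w : EReal) < U → DifferentiableAt ℝ f w ∧
      DifferentiableAt ℝ (deriv f) w ∧ DifferentiableAt ℝ (deriv (deriv f)) w)
    (hanti : StrictAntiOn (deriv (deriv (deriv f))) {w : ℝ | 0 < w ∧ (w : EReal) < U})
    (Φ : ℝ → ℝ)
    (hΦ : ∀ δ : ℝ, Φ δ = sSup ((fun w : ℝ =>
      |f w - ((3 * f δ / δ - 2 * deriv f δ + δ * deriv (deriv f) δ / 2) * w +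
        (-6 * f δ / δ ^ 2 + 6 * deriv f δ / δ - 2 * deriv (deriv f) δ) / 2 * w ^ 2 +
        (6 * f δ / δ ^ 3 - 6 * deriv f δ / δ ^ 2 + 3 * deriv (deriv f) δ / δ) / 6 * w ^ 3)|)
      '' Set.Icc 0 δ)) :
    StrictMonoOn Φ {δ : ℝ | 0 < δ ∧ (δ : EReal) < U} := by
  have hΦ' : ∀ δ, Φ δ = sSup ((fun w => |Smoothing.error f δ w|) '' Icc 0 δ) := hΦ
  rintro δ₁ ⟨hδ₁, -⟩ δ₂ ⟨-, hδ₂U⟩ hδ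
  have hltU : ∀ x : ℝ, x ≤ δ₂ → (x : EReal) < U :=
    fun x hx => (EReal.coe_le_coe_iff.2 hx).trans_lt hδ₂U
  have h : Smoothing.Admissible f δ₂ :=
    { zero := hf0
      continuousOn := hcont.mono fun x hx => ⟨hx.1, hltU x hx.2⟩
      differentiableAt := fun x hx => hdiff x hx.1 (hltU x hx.2)
      strictAntiOn := hanti.mono fun x hx => ⟨hx.1, hltU x hx.2⟩ }
  rw [hΦ', hΦ', isCompact_Icc.sSup_lt_iff_of_continuous (nonempty_Icc.2 hδ₁.le)
    (h.continuousOn_abs_error hδ.le)]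
  intro w hw
  obtain ⟨v, hv, hwv⟩ := h.exists_abs_error_lt hδ₁ hδ le_rfl w hw
  exact hwv.trans_le <| le_csSup (isCompact_Icc.bddAbove_image (h.continuousOn_abs_error le_rfl))
    (mem_image_of_mem _ hv)

theorem stmt_16 (f : ℝ → ℝ) (U : EReal) (hU : 0 < U) (hf0 : f 0 = 0)
    (hcont : ContinuousOn f {w : ℝ | 0 ≤ w ∧ (w : EReal) < U})
    (hdiff : ∀ w : ℝ, 0 < w → (w : EReal) < U → DifferentiableAt ℝ f w ∧
      DifferentiableAt ℝ (deriv f) w ∧ DifferentiableAt ℝ (deriv (deriv f)) w)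
    (hanti : StrictAntiOn (deriv (deriv (deriv f))) {w : ℝ | 0 < w ∧ (w : EReal) < U})
    (Φ : ℝ → ℝ)
    (hΦ : ∀ δ : ℝ, Φ δ = sSup ((fun w : ℝ =>
      |f w - ((3 * f δ / δ - 2 * deriv f δ + δ * deriv (deriv f) δ / 2) * w +
        (-6 * f δ / δ ^ 2 + 6 * deriv f δ / δ - 2 * deriv (deriv f) δ) / 2 * w ^ 2 +
        (6 * f δ / δ ^ 3 - 6 * deriv f δ / δ ^ 2 + 3 * deriv (deriv f) δ / δ) / 6 * w ^ 3)|)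
      '' Set.Icc 0 δ)) :
    StrictMonoOn Φ {δ : ℝ | 0 < δ ∧ (δ : EReal) < U} :=
  stmt_16_general f U hf0 hcont hdiff hanti Φ hΦ
end

section
/- Let f : [0,U) → ℝ with U > 2δ > 0, f(0)=0, f continuous, increasing, and strictly concave on [0,U), thrice differentiable on (0,U), f''' strictly decreasing on (0,2δ), and f'''(w) ≥ 0 on (0,2δ). Then there exists a unique λ̂ ∈ (0,δ) with f'(λ̂) = g₁, and the shift smoothing h(w) := f(w + λ̂) − f(λ̂) satisfies h(w) ≤ g(w) for all w ∈ [0,δ], where g is the δ-smoothing of f. -/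
/-!
Uniqueness of `λ̂` is strict concavity. For existence, `f'` decreases continuously from a limit
above `g₁` at `0⁺`, and `f'(δ) < g₁` because `g₁ - f'(δ) = (6f - 6δf' + δ²f'')(δ) / 2δ`, which is
positive by concavity (`f(δ/2) ≥ f(δ)/2`, `δf'(δ) ≤ f(δ)`) and a Taylor expansion at `δ` with
`f''' > 0`.

For the bound, `φ := g - h` vanishes to first order at `0` (as `h'(0) = f'(λ̂) = g₁`), and
`φ(δ) = f(δ) + f(λ̂) - f(δ + λ̂) ≥ 0` by concavity. Moreover `φ''(δ) = f''(δ) - f''(δ + λ̂) < 0`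
and `φ'' = g'' - f''(· + λ̂)` is convex since `f'''` decreases. A negative value of `φ` would
give, by the mean value theorem twice, points `r < s < δ` with `φ''(r) < 0 < φ''(s)`,
contradicting convexity of `φ''`.
-/

open Set Filter Topology

section Calculus

variable {φ φ' : ℝ → ℝ} {a b : ℝ}

lemma strictMonoOn_Icc_of_hasDerivAt_pos_s18 (hφ : ∀ t ∈ Icc a b, HasDerivAt φ (φ' t) t)
    (hpos : ∀ t ∈ Ioo a b, 0 < φ' t) : StrictMonoOn φ (Icc a b) :=
  strictMonoOn_of_hasDerivWithinAt_pos (convex_Icc a b)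
    (fun t ht => (hφ t ht).continuousAt.continuousWithinAt)
    (fun t ht => (hφ t (interior_subset ht)).hasDerivWithinAt)
    (fun t ht => hpos t (by rwa [interior_Icc] at ht))

lemma strictAntiOn_Icc_of_hasDerivAt_neg (hφ : ∀ t ∈ Icc a b, HasDerivAt φ (φ' t) t)
    (hneg : ∀ t ∈ Ioo a b, φ' t < 0) : StrictAntiOn φ (Icc a b) :=
  strictAntiOn_of_hasDerivWithinAt_neg (convex_Icc a b)
    (fun t ht => (hφ t ht).continuousAt.continuousWithinAt)
    (fun t ht => (hφ t (interior_subset ht)).hasDerivWithinAt)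
    (fun t ht => hneg t (by rwa [interior_Icc] at ht))

lemma exists_mem_Ioo_hasDerivAt_eq_slope {s : Set ℝ} (hφ : ∀ t ∈ s, HasDerivAt φ (φ' t) t)
    (hab : a < b) (hs : Icc a b ⊆ s) : ∃ c ∈ Ioo a b, φ' c = (φ b - φ a) / (b - a) :=
  exists_hasDerivAt_eq_slope φ φ' hab
    (fun t ht => (hφ t (hs ht)).continuousAt.continuousWithinAt)
    (fun t ht => hφ t (hs (Ioo_subset_Icc_self ht)))

lemma convexOn_Icc_of_hasDerivAt_of_monotoneOn (hφ : ∀ t ∈ Icc a b, HasDerivAt φ (φ' t) t)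
    (hmono : MonotoneOn φ' (Icc a b)) : ConvexOn ℝ (Icc a b) φ := by
  have hderiv : ∀ t ∈ Ioo a b, deriv φ t = φ' t := fun t ht => (hφ t (Ioo_subset_Icc_self ht)).deriv
  refine MonotoneOn.convexOn_of_deriv (convex_Icc a b)
    (fun t ht => (hφ t ht).continuousAt.continuousWithinAt) ?_ ?_ <;> rw [interior_Icc]
  · exact fun t ht => (hφ t (Ioo_subset_Icc_self ht)).differentiableAt.differentiableWithinAt
  · intro s hs t ht hst
    rw [hderiv s hs, hderiv t ht]
    exact hmono (Ioo_subset_Icc_self hs) (Ioo_subset_Icc_self ht) hst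

end Calculus

theorem lt_taylor_of_deriv3_pos {f f₁ f₂ f₃ : ℝ → ℝ} {x b : ℝ} (hxb : x < b)
    (h₁ : ∀ t ∈ Icc x b, HasDerivAt f (f₁ t) t) (h₂ : ∀ t ∈ Icc x b, HasDerivAt f₁ (f₂ t) t)
    (h₃ : ∀ t ∈ Icc x b, HasDerivAt f₂ (f₃ t) t) (hpos : ∀ t ∈ Ioo x b, 0 < f₃ t) :
    f x < f b + f₁ b * (x - b) + f₂ b * (x - b) ^ 2 / 2 := by
  have hb : b ∈ Icc x b := right_mem_Icc.2 hxb.le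
  have hid (t : ℝ) : HasDerivAt (fun t => t - b) 1 t := (hasDerivAt_id t).sub_const b
  have hf₂ : ∀ t ∈ Ioo x b, f₂ t < f₂ b := fun t ht =>
    strictMonoOn_Icc_of_hasDerivAt_pos_s18 h₃ hpos (Ioo_subset_Icc_self ht) hb ht.2
  have hψ₁ : ∀ t ∈ Icc x b, HasDerivAt (fun t => f₁ t - f₂ b * (t - b)) (f₂ t - f₂ b) t :=
    fun t ht => ((h₂ t ht).sub ((hid t).const_mul (f₂ b))).congr_deriv (by ring)
  have hf₁ : ∀ t ∈ Ioo x b, f₁ b < f₁ t - f₂ b * (t - b) := fun t ht => by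
    simpa using strictAntiOn_Icc_of_hasDerivAt_neg hψ₁ (fun s hs => sub_neg.2 (hf₂ s hs))
      (Ioo_subset_Icc_self ht) hb ht.2
  have hψ : ∀ t ∈ Icc x b, HasDerivAt (fun t => f t - f₁ b * (t - b) - f₂ b * (t - b) ^ 2 / 2)
      (f₁ t - f₁ b - f₂ b * (t - b)) t := fun t ht =>
    (((h₁ t ht).sub ((hid t).const_mul (f₁ b))).sub
      ((((hid t).pow 2).const_mul (f₂ b)).div_const 2)).congr_deriv (by ring)
  have hψx := strictMonoOn_Icc_of_hasDerivAt_pos_s18 hψ (fun t ht => by linarith [hf₁ t ht])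
    (left_mem_Icc.2 hxb.le) hb hxb
  simp only [sub_self, mul_zero, zero_pow two_ne_zero, zero_div, sub_zero] at hψx
  linarith

theorem nonneg_of_convexOn_deriv2 {φ φ' φ'' : ℝ → ℝ} {a b : ℝ}
    (hφ : ∀ t ∈ Icc a b, HasDerivAt φ (φ' t) t) (hφ' : ∀ t ∈ Icc a b, HasDerivAt φ' (φ'' t) t)
    (ha : φ a = 0) (ha' : φ' a = 0) (hb : 0 ≤ φ b) (hconv : ConvexOn ℝ (Icc a b) φ'')
    (hb'' : φ'' b < 0) : ∀ t ∈ Icc a b, 0 ≤ φ t := by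
  by_contra! ⟨w, hw, hneg⟩
  have haw : a < w := lt_of_le_of_ne hw.1 (by rintro rfl; linarith)
  have hwb : w < b := lt_of_le_of_ne hw.2 (by rintro rfl; linarith)
  obtain ⟨p, hp, hp'⟩ := exists_mem_Ioo_hasDerivAt_eq_slope hφ haw (Icc_subset_Icc le_rfl hwb.le)
  obtain ⟨q, hq, hq'⟩ := exists_mem_Ioo_hasDerivAt_eq_slope hφ hwb (Icc_subset_Icc haw.le le_rfl)
  have hp_neg : φ' p < 0 := by rw [hp', ha]; exact div_neg_of_neg_of_pos (by linarith) (by linarith)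
  have hq_pos : 0 < φ' q := by rw [hq']; exact div_pos (by linarith) (by linarith)
  have hpq : p < q := hp.2.trans hq.1
  obtain ⟨r, hr, hr'⟩ := exists_mem_Ioo_hasDerivAt_eq_slope hφ' hp.1
    (Icc_subset_Icc le_rfl (hpq.trans hq.2).le)
  obtain ⟨s, hs, hs'⟩ := exists_mem_Ioo_hasDerivAt_eq_slope hφ' hpq
    (Icc_subset_Icc hp.1.le hq.2.le)
  have hr_neg : φ'' r < 0 := by
    rw [hr', ha']; exact div_neg_of_neg_of_pos (by linarith) (by linarith [hp.1])
  have hs_pos : 0 < φ'' s := by rw [hs']; exact div_pos (by linarith) (by linarith)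
  have hrb : r ≤ b := by linarith [hr.2, hq.2]
  have hs_seg : s ∈ segment ℝ r b := by
    rw [segment_eq_Icc hrb]; exact ⟨by linarith [hr.2, hs.1], by linarith [hs.2, hq.2]⟩
  have hs_le := hconv.le_on_segment ⟨hr.1.le, hrb⟩ (right_mem_Icc.2 (haw.trans hwb).le) hs_seg
  linarith [max_lt hr_neg hb'']

theorem le_cubic_of_deriv3_antitoneOn {F F₁ F₂ F₃ : ℝ → ℝ} {δ c₁ c₂ c₃ : ℝ}
    (h₁ : ∀ t ∈ Icc 0 δ, HasDerivAt F (F₁ t) t) (h₂ : ∀ t ∈ Icc 0 δ, HasDerivAt F₁ (F₂ t) t)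
    (h₃ : ∀ t ∈ Icc 0 δ, HasDerivAt F₂ (F₃ t) t) (hanti : AntitoneOn F₃ (Icc 0 δ))
    (h0 : F 0 = 0) (h0' : F₁ 0 = c₁) (hδ : F δ ≤ c₁ * δ + c₂ / 2 * δ ^ 2 + c₃ / 6 * δ ^ 3)
    (hδ₂ : c₂ + c₃ * δ < F₂ δ) :
    ∀ w ∈ Icc 0 δ, F w ≤ c₁ * w + c₂ / 2 * w ^ 2 + c₃ / 6 * w ^ 3 := by
  have hφ : ∀ t ∈ Icc 0 δ, HasDerivAt (fun t => c₁ * t + c₂ / 2 * t ^ 2 + c₃ / 6 * t ^ 3 - F t)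
      (c₁ + c₂ * t + c₃ / 2 * t ^ 2 - F₁ t) t := fun t ht =>
    (((((hasDerivAt_id t).const_mul c₁).add ((hasDerivAt_pow 2 t).const_mul (c₂ / 2))).add
      ((hasDerivAt_pow 3 t).const_mul (c₃ / 6))).sub (h₁ t ht)).congr_deriv (by push_cast; ring)
  have hφ' : ∀ t ∈ Icc 0 δ, HasDerivAt (fun t => c₁ + c₂ * t + c₃ / 2 * t ^ 2 - F₁ t)
      (c₂ + c₃ * t - F₂ t) t := fun t ht =>
    (((((hasDerivAt_id t).const_mul c₂).const_add c₁).add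
      ((hasDerivAt_pow 2 t).const_mul (c₃ / 2))).sub (h₂ t ht)).congr_deriv (by push_cast; ring)
  have hφ'' : ∀ t ∈ Icc 0 δ, HasDerivAt (fun t => c₂ + c₃ * t - F₂ t) (c₃ - F₃ t) t :=
    fun t ht => ((((hasDerivAt_id t).const_mul c₃).const_add c₂).sub (h₃ t ht)).congr_deriv
      (by simp)
  have hconv := convexOn_Icc_of_hasDerivAt_of_monotoneOn hφ''
    fun s hs t ht hst => sub_le_sub_left (hanti hs ht hst) c₃
  intro w hw
  simpa using nonneg_of_convexOn_deriv2 hφ hφ' (by simp [h0]) (by simp [h0']) (by simpa using hδ)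
    hconv (by simpa using hδ₂) w hw

theorem ConcaveOn.map_add_add_map_zero_le {f : ℝ → ℝ} {s : Set ℝ} (hf : ConcaveOn ℝ s f)
    (h0 : 0 ∈ s) {x y : ℝ} (hxy : x + y ∈ s) (hx : 0 ≤ x) (hy : 0 ≤ y) :
    f (x + y) + f 0 ≤ f x + f y := by
  rcases (add_nonneg hx hy).eq_or_lt with h | h
  · obtain ⟨rfl, rfl⟩ : x = 0 ∧ y = 0 := ⟨by linarith, by linarith⟩
    simp
  have hcomb {u v : ℝ} (hu : 0 ≤ u) (hv : 0 ≤ v) (huv : u + v = x + y) :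
      v / (x + y) * f 0 + u / (x + y) * f (x + y) ≤ f u := by
    have := hf.2 h0 hxy (div_nonneg hv h.le) (div_nonneg hu h.le)
      (by rw [← add_div, add_comm, huv, div_self h.ne'])
    simpa [smul_eq_mul, div_mul_cancel₀ _ h.ne'] using this
  have hx' := hcomb hx hy rfl
  have hy' := hcomb hy hx (add_comm y x)
  have hsum : (y / (x + y) + x / (x + y)) * (f 0 + f (x + y)) = f 0 + f (x + y) := by
    rw [← add_div, add_comm y x, div_self h.ne', one_mul]
  linarith

theorem pos_of_strictAntiOn_Ioo_of_nonneg {u : ℝ → ℝ} {a b : ℝ} (hanti : StrictAntiOn u (Ioo a b))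
    (hnonneg : ∀ t ∈ Ioo a b, 0 ≤ u t) : ∀ t ∈ Ioo a b, 0 < u t := fun t ht =>
  have hmid : (t + b) / 2 ∈ Ioo a b := ⟨by linarith [ht.1, ht.2], by linarith [ht.2]⟩
  (hnonneg _ hmid).trans_lt (hanti ht hmid (by linarith [ht.2]))

theorem existsUnique_eq_of_strictAntiOn_of_tendsto {u : ℝ → ℝ} {δ c : ℝ} {L : EReal}
    (hδ : 0 < δ) (hcont : ContinuousOn u (Ioc 0 δ)) (hanti : StrictAntiOn u (Ioc 0 δ))
    (hL : Tendsto (fun w => (u w : EReal)) (𝓝[>] 0) (𝓝 L)) (hcL : (c : EReal) < L)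
    (hδc : u δ < c) : ∃! l, l ∈ Ioo 0 δ ∧ u l = c := by
  obtain ⟨a, hca, ha⟩ := ((hL.eventually_const_lt hcL).and
    (Ioo_mem_nhdsGT_of_mem ⟨le_rfl, hδ⟩)).exists
  obtain ⟨l, hl, hlc⟩ := intermediate_value_Ioo' ha.2.le
    (hcont.mono (Icc_subset_Ioc_iff ha.2.le |>.2 ⟨ha.1, le_rfl⟩)) ⟨hδc, EReal.coe_lt_coe_iff.1 hca⟩
  refine ⟨l, ⟨⟨ha.1.trans hl.1, hl.2⟩, hlc⟩, fun y hy => ?_⟩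
  exact hanti.injOn (Ioo_subset_Ioc_self hy.1) ⟨ha.1.trans hl.1, hl.2.le⟩ (hy.2.trans hlc.symm)

theorem deriv_lt_of_concaveOn_of_deriv3_pos {f : ℝ → ℝ} {δ : ℝ} (hδ : 0 < δ) (hf0 : f 0 = 0)
    (hconc : ConcaveOn ℝ (Icc 0 δ) f)
    (hd : ∀ t ∈ Icc (δ / 2) δ, DifferentiableAt ℝ f t ∧ DifferentiableAt ℝ (deriv f) t ∧
      DifferentiableAt ℝ (deriv (deriv f)) t)
    (hpos : ∀ t ∈ Ioo (δ / 2) δ, 0 < deriv (deriv (deriv f)) t) :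
    deriv f δ < 3 * f δ / δ - 2 * deriv f δ + δ * deriv (deriv f) δ / 2 := by
  have h0 : (0 : ℝ) ∈ Icc 0 δ := left_mem_Icc.2 hδ.le
  have hδmem : δ ∈ Icc 0 δ := right_mem_Icc.2 hδ.le
  have htaylor := lt_taylor_of_deriv3_pos (by linarith) (fun t ht => (hd t ht).1.hasDerivAt)
    (fun t ht => (hd t ht).2.1.hasDerivAt) (fun t ht => (hd t ht).2.2.hasDerivAt) hpos
  have hmid : f δ / 2 ≤ f (δ / 2) := by
    have := hconc.2 h0 hδmem (by norm_num : (0 : ℝ) ≤ 1 / 2) (by norm_num : (0 : ℝ) ≤ 1 / 2)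
      (by norm_num)
    simpa only [smul_eq_mul, mul_zero, zero_add, hf0, one_div_mul_eq_div] using this
  have hslope : deriv f δ * δ ≤ f δ := by
    have := hconc.deriv_le_slope h0 hδmem hδ (hd δ (right_mem_Icc.2 (by linarith))).1
    rwa [slope_def_field, hf0, sub_zero, sub_zero, le_div_iff₀ hδ] at this
  have hkey : 0 < 6 * f δ - 6 * (deriv f δ * δ) + deriv (deriv f) δ * δ ^ 2 := by
    nlinarith
  have hrepr : 3 * f δ / δ - 2 * deriv f δ + δ * deriv (deriv f) δ / 2 - deriv f δ =
      (6 * f δ - 6 * (deriv f δ * δ) + deriv (deriv f) δ * δ ^ 2) / (2 * δ) := by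
    field_simp
    ring
  rw [← sub_pos, hrepr]
  exact div_pos hkey (by positivity)

theorem shift_sub_le_cubic {f : ℝ → ℝ} {δ l c₁ c₂ c₃ : ℝ} (hδ : 0 ≤ δ) (hl : 0 ≤ l)
    (hf0 : f 0 = 0) (hconc : ConcaveOn ℝ (Icc 0 (δ + l)) f)
    (hd : ∀ t ∈ Icc l (δ + l), DifferentiableAt ℝ f t ∧ DifferentiableAt ℝ (deriv f) t ∧
      DifferentiableAt ℝ (deriv (deriv f)) t)
    (hanti : AntitoneOn (deriv (deriv (deriv f))) (Icc l (δ + l)))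
    (hl₁ : deriv f l = c₁) (hδ₀ : c₁ * δ + c₂ / 2 * δ ^ 2 + c₃ / 6 * δ ^ 3 = f δ)
    (hδ₂ : c₂ + c₃ * δ < deriv (deriv f) (δ + l)) :
    ∀ w ∈ Icc 0 δ, f (w + l) - f l ≤ c₁ * w + c₂ / 2 * w ^ 2 + c₃ / 6 * w ^ 3 := by
  have hsh : ∀ t ∈ Icc 0 δ, t + l ∈ Icc l (δ + l) :=
    fun t ht => ⟨by linarith [ht.1], by linarith [ht.2]⟩
  refine le_cubic_of_deriv3_antitoneOn (F := fun t => f (t + l) - f l)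
    (fun t ht => ((hd _ (hsh t ht)).1.hasDerivAt.comp_add_const t l).sub_const (f l))
    (fun t ht => (hd _ (hsh t ht)).2.1.hasDerivAt.comp_add_const t l)
    (fun t ht => (hd _ (hsh t ht)).2.2.hasDerivAt.comp_add_const t l)
    (fun s hs t ht hst => hanti (hsh s hs) (hsh t ht) (by linarith)) (by simp)
    (by rwa [zero_add]) ?_ hδ₂
  have hsubadd := hconc.map_add_add_map_zero_le (left_mem_Icc.2 (by positivity))
    (right_mem_Icc.2 (by positivity)) hδ hl
  rw [hδ₀]
  linarith

theorem smoothing_cubic_eval_right (a b c : ℝ) {δ : ℝ} (hδ : δ ≠ 0) :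
    (3 * a / δ - 2 * b + δ * c / 2) * δ + (-6 * a / δ ^ 2 + 6 * b / δ - 2 * c) / 2 * δ ^ 2 +
      (6 * a / δ ^ 3 - 6 * b / δ ^ 2 + 3 * c / δ) / 6 * δ ^ 3 = a ∧
    (-6 * a / δ ^ 2 + 6 * b / δ - 2 * c) + (6 * a / δ ^ 3 - 6 * b / δ ^ 2 + 3 * c / δ) * δ = c := by
  constructor <;> field_simp <;> ring

theorem stmt_18_general (f : ℝ → ℝ) (U : EReal) (δ : ℝ) (hδ : 0 < δ)
    (hU : ((2 * δ : ℝ) : EReal) < U) (hf0 : f 0 = 0)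
    (hconc : StrictConcaveOn ℝ {w : ℝ | 0 ≤ w ∧ (w : EReal) < U} f)
    (hdiff : ∀ w : ℝ, 0 < w → (w : EReal) < U → DifferentiableAt ℝ f w ∧
      DifferentiableAt ℝ (deriv f) w ∧ DifferentiableAt ℝ (deriv (deriv f)) w)
    (hanti : StrictAntiOn (deriv (deriv (deriv f))) (Set.Ioo 0 (2 * δ)))
    (hnonneg : ∀ w ∈ Set.Ioo (0:ℝ) (2 * δ), 0 ≤ deriv (deriv (deriv f)) w)
    (g1 : ℝ) (hg1 : g1 = 3 * f δ / δ - 2 * deriv f δ + δ * deriv (deriv f) δ / 2)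
    (g : ℝ → ℝ)
    (hg : g = fun w =>
      g1 * w +
      (-6 * f δ / δ ^ 2 + 6 * deriv f δ / δ - 2 * deriv (deriv f) δ) / 2 * w ^ 2 +
      (6 * f δ / δ ^ 3 - 6 * deriv f δ / δ ^ 2 + 3 * deriv (deriv f) δ / δ) / 6 * w ^ 3)
    (L : EReal)
    (hL : Filter.Tendsto (fun w : ℝ => (((deriv f w : ℝ)) : EReal))
      (nhdsWithin 0 (Set.Ioi 0)) (nhds L))
    (hLg : (g1 : EReal) < L) :
    (∃! l : ℝ, l ∈ Set.Ioo 0 δ ∧ deriv f l = g1) ∧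
    ∀ l ∈ Set.Ioo (0:ℝ) δ, deriv f l = g1 →
      ∀ w ∈ Set.Icc (0:ℝ) δ, f (w + l) - f l ≤ g w := by
  have hconc' {b : ℝ} (hb : b < 2 * δ) : ConcaveOn ℝ (Icc 0 b) f := hconc.concaveOn.subset
    (fun w hw => ⟨hw.1, (EReal.coe_lt_coe_iff.2 (hw.2.trans_lt hb)).trans hU⟩) (convex_Icc _ _)
  have hd : ∀ w ∈ Ioo 0 (2 * δ), DifferentiableAt ℝ f w ∧ DifferentiableAt ℝ (deriv f) w ∧
      DifferentiableAt ℝ (deriv (deriv f)) w :=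
    fun w hw => hdiff w hw.1 ((EReal.coe_lt_coe_iff.2 hw.2).trans hU)
  have hIcc {a b : ℝ} (ha : 0 < a) (hb : b < 2 * δ) : Icc a b ⊆ Ioo 0 (2 * δ) :=
    fun w hw => ⟨ha.trans_le hw.1, hw.2.trans_lt hb⟩
  have hIoc : Ioc 0 δ ⊆ Ioo 0 (2 * δ) := fun w hw => ⟨hw.1, by linarith [hw.2]⟩
  have hf' : StrictAntiOn (deriv f) (Ioo 0 (2 * δ)) :=
    (hconc.subset (fun w hw => ⟨hw.1.le, (EReal.coe_lt_coe_iff.2 hw.2).trans hU⟩)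
      (convex_Ioo _ _)).strictAntiOn_deriv fun w hw => (hd w hw).1
  have hpos := pos_of_strictAntiOn_Ioo_of_nonneg hanti hnonneg
  have hf'' : StrictMonoOn (deriv (deriv f)) (Ioo 0 (2 * δ)) :=
    strictMonoOn_of_deriv_pos (convex_Ioo _ _)
      (fun w hw => (hd w hw).2.2.continuousAt.continuousWithinAt) (by rwa [interior_Ioo])
  have hδg1 : deriv f δ < g1 := hg1 ▸ deriv_lt_of_concaveOn_of_deriv3_pos hδ hf0
    (hconc' (by linarith)) (fun t ht => hd t (hIcc (by linarith) (by linarith) ht))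
    (fun t ht => hpos t (hIcc (by linarith) (by linarith) (Ioo_subset_Icc_self ht)))
  refine ⟨existsUnique_eq_of_strictAntiOn_of_tendsto hδ
    (fun w hw => (hd w (hIoc hw)).2.1.continuousAt.continuousWithinAt)
    (hf'.mono hIoc) hL hLg hδg1, fun l hl hlg => ?_⟩
  obtain ⟨hval, hsecond⟩ := smoothing_cubic_eval_right (f δ) (deriv f δ) (deriv (deriv f) δ) hδ.ne'
  subst hg hg1
  have hδl : δ + l < 2 * δ := by linarith [hl.2]
  exact shift_sub_le_cubic hδ.le hl.1.le hf0 (hconc' hδl) (fun t ht => hd t (hIcc hl.1 hδl ht))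
    (hanti.antitoneOn.mono (hIcc hl.1 hδl)) hlg hval
    (by rw [hsecond]; exact hf'' ⟨hδ, by linarith⟩ ⟨by linarith [hl.1], hδl⟩ (by linarith [hl.1]))

theorem stmt_18 (f : ℝ → ℝ) (U : EReal) (δ : ℝ) (hδ : 0 < δ)
    (hU : ((2 * δ : ℝ) : EReal) < U) (hf0 : f 0 = 0)
    (hcont : ContinuousOn f {w : ℝ | 0 ≤ w ∧ (w : EReal) < U})
    (hmono : StrictMonoOn f {w : ℝ | 0 ≤ w ∧ (w : EReal) < U})
    (hconc : StrictConcaveOn ℝ {w : ℝ | 0 ≤ w ∧ (w : EReal) < U} f)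
    (hdiff : ∀ w : ℝ, 0 < w → (w : EReal) < U → DifferentiableAt ℝ f w ∧
      DifferentiableAt ℝ (deriv f) w ∧ DifferentiableAt ℝ (deriv (deriv f)) w)
    (hanti : StrictAntiOn (deriv (deriv (deriv f))) (Set.Ioo 0 (2 * δ)))
    (hnonneg : ∀ w ∈ Set.Ioo (0:ℝ) (2 * δ), 0 ≤ deriv (deriv (deriv f)) w)
    (g1 : ℝ) (hg1 : g1 = 3 * f δ / δ - 2 * deriv f δ + δ * deriv (deriv f) δ / 2)
    (g : ℝ → ℝ)
    (hg : g = fun w =>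
      g1 * w +
      (-6 * f δ / δ ^ 2 + 6 * deriv f δ / δ - 2 * deriv (deriv f) δ) / 2 * w ^ 2 +
      (6 * f δ / δ ^ 3 - 6 * deriv f δ / δ ^ 2 + 3 * deriv (deriv f) δ / δ) / 6 * w ^ 3)
    (L : EReal)
    (hL : Filter.Tendsto (fun w : ℝ => (((deriv f w : ℝ)) : EReal))
      (nhdsWithin 0 (Set.Ioi 0)) (nhds L))
    (hLg : (g1 : EReal) < L) :
    (∃! l : ℝ, l ∈ Set.Ioo 0 δ ∧ deriv f l = g1) ∧
    ∀ l ∈ Set.Ioo (0:ℝ) δ, deriv f l = g1 →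
      ∀ w ∈ Set.Icc (0:ℝ) δ, f (w + l) - f l ≤ g w :=
  stmt_18_general f U δ hδ hU hf0 hconc hdiff hanti hnonneg g1 hg1 g hg L hL hLg
end
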